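/- arXiv:1406.0042 — 5 statements merged into one kernel-verified Lean document; each statement's English description precedes it below -/
import Mathlib

section
/- Let 0 < b ≤ ∞, and let I = (a,b) with |a| ≤ b, or I = [a,b) with −b ≤ a ≤ 0. Given f : I → ℝ, the following are equivalent: (1) f[A] ∈ P_2 for every A ∈ P_2(I); (2) f(√(xy))² ≤ f(x)f(y) for all x, y ∈ I ∩ [0,∞), and |f(x)| ≤ f(y) whenever x, y ∈ I with |x| ≤ y. In particular, if (1) holds, then either f ≡ 0 on I \ {−b}, or f(x) > 0 for all x ∈ I ∩ (0,∞); moreover f is continuous on I ∩ (0,∞). -/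
/-!
Testing `f[A] ⪰ 0` on `!![x, √(xy); √(xy), y]` and `!![y, x; x, y]` gives the two conditions;
conversely they bound `|f (A 0 1)|` by `f (√(A 0 0 * A 1 1))`, hence by `√(f (A 0 0) * f (A 1 1))`.

On `I ∩ (0, ∞)` the conditions make `f` nonnegative, nondecreasing and midpoint log-convex with
respect to the geometric mean. Along the iterated geometric means `c * σ ^ (2⁻¹ ^ n)` of `c` and
`c * σ`, a zero of `f` spreads to all of `I ∩ (0, ∞)` (and then to `I \ {-b}` through
`|f x| ≤ f |x|`), whereas if `f > 0` the excess `f (c * σ ^ (2⁻¹ ^ n)) - f c` at least halves at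
each step, giving right continuity at `c`; left continuity follows from
`f c ^ 2 ≤ f (c * σ ^ (-2⁻¹ ^ n)) * f (c * σ ^ (2⁻¹ ^ n))`.
-/

open Matrix Set Filter Topology

lemma quadratic_form_nonneg {α β γ : ℝ} (hα : 0 ≤ α) (hγ : 0 ≤ γ) (h : β ^ 2 ≤ α * γ)
    (x y : ℝ) : 0 ≤ α * x ^ 2 + 2 * β * (x * y) + γ * y ^ 2 := by
  rcases hα.eq_or_lt with rfl | hα
  · obtain rfl : β = 0 := by nlinarith
    simpa using mul_nonneg hγ (sq_nonneg y)
  · refine (mul_nonneg_iff_of_pos_left hα).1 ?_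
    nlinarith [sq_nonneg (α * x + β * y), mul_nonneg (sub_nonneg.2 h) (sq_nonneg y)]

theorem Matrix.posSemidef_fin_two_iff {A : Matrix (Fin 2) (Fin 2) ℝ} :
    A.PosSemidef ↔ A 1 0 = A 0 1 ∧ 0 ≤ A 0 0 ∧ 0 ≤ A 1 1 ∧ A 0 1 ^ 2 ≤ A 0 0 * A 1 1 := by
  have hform : ∀ x : Fin 2 → ℝ, star x ⬝ᵥ (A *ᵥ x) =
      A 0 0 * x 0 ^ 2 + (A 0 1 + A 1 0) * (x 0 * x 1) + A 1 1 * x 1 ^ 2 := by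
    intro x
    simp only [dotProduct, mulVec, Fin.sum_univ_two, star_trivial]
    ring
  have hherm : A.IsHermitian ↔ A 1 0 = A 0 1 := by
    refine ⟨fun h ↦ by simpa using h.apply 0 1, fun h ↦ ?_⟩
    ext i j
    fin_cases i <;> fin_cases j <;> simp [h]
  rw [posSemidef_iff_dotProduct_mulVec, hherm]
  simp_rw [hform]
  refine and_congr_right fun hsymm ↦ ?_
  rw [hsymm, ← two_mul]
  refine ⟨fun h ↦ ⟨by simpa using h ![1, 0], by simpa using h ![0, 1], ?_⟩,
    fun ⟨h00, h11, hdet⟩ x ↦ quadratic_form_nonneg h00 h11 hdet (x 0) (x 1)⟩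
  have := discrim_le_zero (a := A 0 0) (b := 2 * A 0 1) (c := A 1 1) fun t ↦ by
    simpa [sq, mul_assoc] using h ![t, 1]
  rw [discrim] at this
  linarith

theorem Set.OrdConnected.sqrt_mul_mem {I : Set ℝ} (hI : I.OrdConnected) {x y : ℝ}
    (hx : x ∈ I) (hy : y ∈ I) (hx0 : 0 ≤ x) (hy0 : 0 ≤ y) : √(x * y) ∈ I := by
  refine hI.uIcc_subset hx hy ⟨Real.le_sqrt_of_sq_le ?_, Real.sqrt_le_iff.2 ⟨?_, ?_⟩⟩
  · rw [sq]
    exact mul_le_mul (min_le_left x y) (min_le_right x y) (le_min hx0 hy0) hx0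
  · exact hx0.trans (le_max_left x y)
  · rw [sq]
    exact mul_le_mul (le_max_left x y) (le_max_right x y) hy0 (hx0.trans (le_max_left x y))

theorem forall_map_posSemidef_iff {I : Set ℝ} (hI : I.OrdConnected) (f : ℝ → ℝ) :
    (∀ A : Matrix (Fin 2) (Fin 2) ℝ, A.PosSemidef → (∀ i j, A i j ∈ I) →
        (A.map f).PosSemidef) ↔
      ((∀ x ∈ I, ∀ y ∈ I, 0 ≤ x → 0 ≤ y → f (√(x * y)) ^ 2 ≤ f x * f y) ∧
       (∀ x ∈ I, ∀ y ∈ I, |x| ≤ y → |f x| ≤ f y)) := by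
  simp only [posSemidef_fin_two_iff, map_apply]
  refine ⟨fun h ↦ ⟨fun x hx y hy hx0 hy0 ↦ ?_, fun x hx y hy hxy ↦ ?_⟩, ?_⟩
  · have hsq : √(x * y) ^ 2 ≤ x * y := (Real.sq_sqrt (mul_nonneg hx0 hy0)).le
    have := h !![x, √(x * y); √(x * y), y] (by simpa using ⟨hx0, hy0, hsq⟩) fun i j ↦ by
      fin_cases i <;> fin_cases j <;> simp [hx, hy, hI.sqrt_mul_mem hx hy hx0 hy0]
    simpa using this.2.2.2
  · have hy0 : 0 ≤ y := (abs_nonneg x).trans hxy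
    have hsq : x ^ 2 ≤ y * y := by nlinarith [sq_abs x, abs_nonneg x]
    obtain ⟨-, hfy, -, hfxy⟩ := h !![y, x; x, y] (by simpa using ⟨hy0, hsq⟩) fun i j ↦ by
      fin_cases i <;> fin_cases j <;> simpa
    simp only [of_apply, cons_val', cons_val_zero, cons_val_one, empty_val',
      cons_val_fin_one] at hfy hfxy
    exact abs_le_of_sq_le_sq (hfxy.trans_eq (sq _).symm) hfy
  · rintro ⟨hgeom, habs⟩ A ⟨hsymm, h00, h11, hdet⟩ hAI
    have hsI := hI.sqrt_mul_mem (hAI 0 0) (hAI 1 1) h00 h11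
    have h01 : |A 0 1| ≤ √(A 0 0 * A 1 1) := Real.abs_le_sqrt hdet
    have hf01 := habs _ (hAI 0 1) _ hsI h01
    have hf_nonneg : ∀ {x}, x ∈ I → 0 ≤ x → 0 ≤ f x := fun hx hx0 ↦
      (abs_nonneg _).trans (habs _ hx _ hx (abs_of_nonneg hx0).le)
    refine ⟨by rw [hsymm], hf_nonneg (hAI 0 0) h00, hf_nonneg (hAI 1 1) h11, ?_⟩
    calc f (A 0 1) ^ 2 ≤ f (√(A 0 0 * A 1 1)) ^ 2 := sq_le_sq' (abs_le.1 hf01).1 (abs_le.1 hf01).2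
      _ ≤ f (A 0 0) * f (A 1 1) := hgeom _ (hAI 0 0) _ (hAI 1 1) h00 h11

noncomputable def geomMeanSeq (c σ : ℝ) (n : ℕ) : ℝ := c * σ ^ ((2 : ℝ)⁻¹ ^ n)

section geomMeanSeq

variable {c σ : ℝ}

lemma geomMeanSeq_zero : geomMeanSeq c σ 0 = c * σ := by
  simp [geomMeanSeq]

lemma sqrt_geomMeanSeq_mul (hc : 0 ≤ c) (hσ : 0 < σ) (n : ℕ) :
    √(geomMeanSeq c σ n * c) = geomMeanSeq c σ (n + 1) := by
  have hpow : σ ^ ((2 : ℝ)⁻¹ ^ n) = (σ ^ ((2 : ℝ)⁻¹ ^ (n + 1))) ^ 2 := by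
    rw [← Real.rpow_mul_natCast hσ.le, pow_succ, Nat.cast_ofNat, mul_assoc,
      inv_mul_cancel₀ two_ne_zero, mul_one]
  have hsq : geomMeanSeq c σ n * c = geomMeanSeq c σ (n + 1) ^ 2 := by
    rw [geomMeanSeq, geomMeanSeq, hpow]
    ring
  rw [hsq, Real.sqrt_sq (by unfold geomMeanSeq; positivity)]

lemma tendsto_geomMeanSeq (hσ : 0 < σ) : Tendsto (geomMeanSeq c σ) atTop (𝓝 c) := by
  have := ((Real.continuousAt_const_rpow hσ.ne').tendsto.comp
    (tendsto_pow_atTop_nhds_zero_of_lt_one (by norm_num : (0 : ℝ) ≤ 2⁻¹) (by norm_num))).const_mul c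
  rwa [Real.rpow_zero, mul_one] at this

lemma geomMeanSeq_mul_geomMeanSeq_inv (hσ : 0 < σ) (n : ℕ) :
    geomMeanSeq c σ n * geomMeanSeq c σ⁻¹ n = c * c := by
  have : σ ^ ((2 : ℝ)⁻¹ ^ n) ≠ 0 := (Real.rpow_pos_of_pos hσ _).ne'
  simp only [geomMeanSeq, Real.inv_rpow hσ.le]
  field_simp

lemma inv_two_pow_le_one (n : ℕ) : (2 : ℝ)⁻¹ ^ n ≤ 1 :=
  pow_le_one₀ (by norm_num) (by norm_num)

lemma geomMeanSeq_mem_Ioc (hc : 0 < c) (hσ : 1 < σ) (n : ℕ) :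
    geomMeanSeq c σ n ∈ Ioc c (c * σ) := by
  have hlt : 1 < σ ^ ((2 : ℝ)⁻¹ ^ n) := Real.one_lt_rpow hσ (by positivity)
  have hle : σ ^ ((2 : ℝ)⁻¹ ^ n) ≤ σ := by
    simpa using Real.rpow_le_rpow_of_exponent_le hσ.le (inv_two_pow_le_one n)
  exact ⟨lt_mul_of_one_lt_right hc hlt, mul_le_mul_of_nonneg_left hle hc.le⟩

lemma geomMeanSeq_mem_Ico (hc : 0 < c) (hσ₀ : 0 < σ) (hσ₁ : σ < 1) (n : ℕ) :
    geomMeanSeq c σ n ∈ Ico (c * σ) c := by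
  have hlt : σ ^ ((2 : ℝ)⁻¹ ^ n) < 1 := Real.rpow_lt_one hσ₀.le hσ₁ (by positivity)
  have hle : σ ≤ σ ^ ((2 : ℝ)⁻¹ ^ n) := by
    simpa using Real.rpow_le_rpow_of_exponent_ge hσ₀ hσ₁.le (inv_two_pow_le_one n)
  exact ⟨mul_le_mul_of_nonneg_left hle hc.le, mul_lt_of_lt_one_right hc hlt⟩

end geomMeanSeq

theorem tendsto_of_sq_succ_le_mul {U : ℕ → ℝ} {F : ℝ} (hF : 0 < F) (hUF : ∀ n, F ≤ U n)
    (hrec : ∀ n, U (n + 1) ^ 2 ≤ U n * F) : Tendsto U atTop (𝓝 F) := by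
  -- `(U (n+1) + F) * (U (n+1) - F) ≤ F * (U n - F)` and `2 * F ≤ U (n+1) + F`
  have hhalve : ∀ n, U (n + 1) - F ≤ 2⁻¹ * (U n - F) := fun n ↦ by
    nlinarith [hrec n, mul_nonneg (sub_nonneg.2 (hUF (n + 1))) (sub_nonneg.2 (hUF (n + 1)))]
  have hdecay : ∀ n, U n - F ≤ 2⁻¹ ^ n * (U 0 - F) := fun n ↦ by
    induction n with
    | zero => simp
    | succ n ih => rw [pow_succ']; nlinarith [hhalve n]
  have hlim : Tendsto (fun n : ℕ ↦ F + (2 : ℝ)⁻¹ ^ n * (U 0 - F)) atTop (𝓝 F) := by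
    simpa using tendsto_const_nhds.add
      ((tendsto_pow_atTop_nhds_zero_of_lt_one (by norm_num : (0 : ℝ) ≤ 2⁻¹) (by norm_num)).mul_const
        (U 0 - F))
  exact tendsto_of_tendsto_of_tendsto_of_le_of_le tendsto_const_nhds hlim hUF
    fun n ↦ by linarith [hdecay n]

theorem MonotoneOn.continuousAt_of_approx {α β : Type*} [LinearOrder α] [TopologicalSpace α]
    [OrderTopology α] [LinearOrder β] [TopologicalSpace β] [OrderTopology β] {f : α → β}
    {s : Set α} {c : α} (hf : MonotoneOn f s) (hs : s ∈ 𝓝 c)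
    (hlower : ∀ l < f c, ∃ p ∈ s, p < c ∧ l < f p)
    (hupper : ∀ u > f c, ∃ q ∈ s, c < q ∧ f q < u) : ContinuousAt f c := by
  refine tendsto_order.2 ⟨fun l hl ↦ ?_, fun u hu ↦ ?_⟩
  · obtain ⟨p, hp, hpc, hlp⟩ := hlower l hl
    filter_upwards [hs, Ioi_mem_nhds hpc] with x hx hpx
    exact hlp.trans_le (hf hp hx hpx.le)
  · obtain ⟨q, hq, hcq, hqu⟩ := hupper u hu
    filter_upwards [hs, Iio_mem_nhds hcq] with x hx hxq
    exact (hf hx hq hxq.le).trans_lt hqu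

lemma exists_one_lt_mul_mem_and_mul_inv_mem {S : Set ℝ} {c : ℝ} (hS : S ∈ 𝓝 c) :
    ∃ σ, 1 < σ ∧ c * σ ∈ S ∧ c * σ⁻¹ ∈ S := by
  have hmul : Tendsto (fun σ : ℝ ↦ c * σ) (𝓝 1) (𝓝 c) := by
    simpa using tendsto_const_nhds.mul (tendsto_id (x := 𝓝 (1 : ℝ)))
  have hdiv : Tendsto (fun σ : ℝ ↦ c * σ⁻¹) (𝓝 1) (𝓝 c) := by
    simpa using tendsto_const_nhds.mul (tendsto_inv₀ (one_ne_zero (α := ℝ)))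
  have h : ∀ᶠ σ in 𝓝[>] (1 : ℝ), c * σ ∈ S ∧ c * σ⁻¹ ∈ S :=
    nhdsWithin_le_nhds ((hmul.eventually hS).and (hdiv.eventually hS))
  obtain ⟨σ, hσS, hσ⟩ := (h.and self_mem_nhdsWithin).exists
  exact ⟨σ, hσ, hσS⟩

lemma IsOpen.exists_gt_mem {S : Set ℝ} (hS : IsOpen S) {x : ℝ} (hx : x ∈ S) : ∃ y ∈ S, x < y :=
  ((show ∀ᶠ y in 𝓝[>] x, y ∈ S from nhdsWithin_le_nhds (hS.mem_nhds hx)).and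
    self_mem_nhdsWithin).exists

def GeomMidpointLogConvexOn (f : ℝ → ℝ) (S : Set ℝ) : Prop :=
  ∀ x ∈ S, ∀ y ∈ S, f (√(x * y)) ^ 2 ≤ f x * f y

namespace GeomMidpointLogConvexOn

variable {f : ℝ → ℝ} {S : Set ℝ}

theorem eq_zero_of_eq_zero (hf : GeomMidpointLogConvexOn f S) (hSo : IsOpen S)
    (hSc : S.OrdConnected) (hmono : MonotoneOn f S) (hnonneg : ∀ x ∈ S, 0 ≤ f x) {x₀ : ℝ}
    (hx₀ : x₀ ∈ S) (hx₀pos : 0 < x₀) (hfx₀ : f x₀ = 0) {t : ℝ} (ht : t ∈ S) : f t = 0 := by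
  have hmax : max t x₀ ∈ S := by rcases max_choice t x₀ with h | h <;> rwa [h]
  obtain ⟨t', ht', hlt⟩ := hSo.exists_gt_mem hmax
  have ht'pos : 0 < t' := hx₀pos.trans_le (le_max_right t x₀) |>.trans hlt
  have hσ₀ : 0 < x₀ / t' := div_pos hx₀pos ht'pos
  have hσ₁ : x₀ / t' < 1 := (div_lt_one ht'pos).2 ((le_max_right t x₀).trans_lt hlt)
  have hx₀_eq : t' * (x₀ / t') = x₀ := mul_div_cancel₀ x₀ ht'pos.ne'
  have hu : ∀ n, geomMeanSeq t' (x₀ / t') n ∈ S := fun n ↦ by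
    have := geomMeanSeq_mem_Ico ht'pos hσ₀ hσ₁ n
    rw [hx₀_eq] at this
    exact hSc.out hx₀ ht' ⟨this.1, this.2.le⟩
  have hfu : ∀ n, f (geomMeanSeq t' (x₀ / t') n) = 0 := fun n ↦ by
    induction n with
    | zero => rwa [geomMeanSeq_zero, hx₀_eq]
    | succ n ih =>
      have := hf _ (hu n) _ ht'
      rw [sqrt_geomMeanSeq_mul ht'pos.le hσ₀, ih, zero_mul] at this
      exact pow_eq_zero_iff two_ne_zero |>.1 (le_antisymm this (sq_nonneg _))
  obtain ⟨n, hn⟩ := ((tendsto_geomMeanSeq hσ₀).eventually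
    (lt_mem_nhds ((le_max_left t x₀).trans_lt hlt))).exists
  exact le_antisymm ((hmono ht (hu n) hn.le).trans_eq (hfu n)) (hnonneg t ht)

theorem continuousOn (hf : GeomMidpointLogConvexOn f S) (hSo : IsOpen S) (hSc : S.OrdConnected)
    (hS0 : S ⊆ Ioi 0) (hmono : MonotoneOn f S) (hpos : ∀ x ∈ S, 0 < f x) : ContinuousOn f S := by
  refine hSo.continuousOn_iff.2 fun c hc ↦ ?_
  have hc0 : 0 < c := hS0 hc
  obtain ⟨σ, hσ, hcσ, hcσ'⟩ := exists_one_lt_mul_mem_and_mul_inv_mem (hSo.mem_nhds hc)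
  have hσ₀ : 0 < σ := one_pos.trans hσ
  have hu : ∀ n, geomMeanSeq c σ n ∈ S ∧ c < geomMeanSeq c σ n := fun n ↦
    have h := geomMeanSeq_mem_Ioc hc0 hσ n
    ⟨hSc.out hc hcσ ⟨h.1.le, h.2⟩, h.1⟩
  have hv : ∀ n, geomMeanSeq c σ⁻¹ n ∈ S ∧ geomMeanSeq c σ⁻¹ n < c := fun n ↦
    have h := geomMeanSeq_mem_Ico hc0 (inv_pos.2 hσ₀) (inv_lt_one_of_one_lt₀ hσ) n
    ⟨hSc.out hcσ' hc ⟨h.1, h.2.le⟩, h.2⟩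
  have hfu : Tendsto (fun n ↦ f (geomMeanSeq c σ n)) atTop (𝓝 (f c)) :=
    tendsto_of_sq_succ_le_mul (hpos c hc) (fun n ↦ hmono hc (hu n).1 (hu n).2.le) fun n ↦ by
      simpa only [sqrt_geomMeanSeq_mul hc0.le hσ₀] using hf _ (hu n).1 _ hc
  have hfv : ∀ n, 2 * f c - f (geomMeanSeq c σ n) ≤ f (geomMeanSeq c σ⁻¹ n) := fun n ↦ by
    have h := hf _ (hv n).1 _ (hu n).1
    rw [mul_comm, geomMeanSeq_mul_geomMeanSeq_inv hσ₀, Real.sqrt_mul_self hc0.le] at h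
    nlinarith [hmono (hv n).1 hc (hv n).2.le, hmono hc (hu n).1 (hu n).2.le, hpos _ (hv n).1,
      sq_nonneg (f (geomMeanSeq c σ n) - f (geomMeanSeq c σ⁻¹ n))]
  refine hmono.continuousAt_of_approx (hSo.mem_nhds hc) (fun l hl ↦ ?_) fun r hr ↦ ?_
  · obtain ⟨n, hn⟩ := (hfu.eventually (gt_mem_nhds (show f c < 2 * f c - l by linarith))).exists
    exact ⟨geomMeanSeq c σ⁻¹ n, (hv n).1, (hv n).2, by linarith [hfv n, hn]⟩
  · obtain ⟨n, hn⟩ := (hfu.eventually (gt_mem_nhds hr)).exists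
    exact ⟨geomMeanSeq c σ n, (hu n).1, (hu n).2, hn⟩

end GeomMidpointLogConvexOn

def IsAdmissibleInterval (a : ℝ) (b : EReal) (I : Set ℝ) : Prop :=
  (I = {x : ℝ | a < x ∧ (x : EReal) < b} ∧ ((|a| : ℝ) : EReal) ≤ b) ∨
    (I = {x : ℝ | a ≤ x ∧ (x : EReal) < b} ∧ -b ≤ (a : EReal) ∧ a ≤ 0)

namespace IsAdmissibleInterval

variable {a : ℝ} {b : EReal} {I : Set ℝ}

theorem ordConnected (hI : IsAdmissibleInterval a b I) : I.OrdConnected := by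
  refine ⟨fun x hx y hy z hz ↦ ?_⟩
  rcases hI with ⟨rfl, -⟩ | ⟨rfl, -⟩
  · exact ⟨hx.1.trans_le hz.1, (EReal.coe_le_coe_iff.2 hz.2).trans_lt hy.2⟩
  · exact ⟨hx.1.trans hz.1, (EReal.coe_le_coe_iff.2 hz.2).trans_lt hy.2⟩

theorem exists_gt_mem (hI : IsAdmissibleInterval a b I) {x : ℝ} (hx : x ∈ I) :
    ∃ y ∈ I, x < y := by
  have hxb : (x : EReal) < b := by rcases hI with ⟨rfl, -⟩ | ⟨rfl, -⟩ <;> exact hx.2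
  obtain ⟨y, hxy, hyb⟩ := EReal.lt_iff_exists_real_btwn.1 hxb
  have hxy : x < y := EReal.coe_lt_coe_iff.1 hxy
  refine ⟨y, ?_, hxy⟩
  rcases hI with ⟨rfl, -⟩ | ⟨rfl, -⟩
  · exact ⟨hx.1.trans hxy, hyb⟩
  · exact ⟨hx.1.trans hxy.le, hyb⟩

theorem abs_mem (hI : IsAdmissibleInterval a b I) {x : ℝ} (hx : x ∈ I) (hxb : (x : EReal) ≠ -b) :
    |x| ∈ I := by
  rcases le_or_gt 0 x with hx0 | hx0
  · rwa [abs_of_nonneg hx0]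
  rw [abs_of_neg hx0]
  rcases hI with ⟨rfl, hab⟩ | ⟨rfl, hba, ha0⟩
  · have ha : a < 0 := hx.1.trans hx0
    refine ⟨by linarith [hx.1], lt_of_lt_of_le ?_ hab⟩
    rw [abs_of_neg ha, EReal.coe_lt_coe_iff]
    linarith [hx.1]
  · have hbx : -b < (x : EReal) := (hba.trans (EReal.coe_le_coe_iff.2 hx.1)).lt_of_ne hxb.symm
    exact ⟨by linarith, by rw [EReal.coe_neg]; exact EReal.neg_lt_comm.1 hbx⟩

theorem isOpen_inter_Ioi (hI : IsAdmissibleInterval a b I) : IsOpen (I ∩ Ioi 0) := by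
  have hb : IsOpen {x : ℝ | (x : EReal) < b} := isOpen_lt continuous_coe_real_ereal continuous_const
  rcases hI with ⟨rfl, -⟩ | ⟨rfl, -, ha0⟩
  · exact (isOpen_Ioi.inter hb).inter isOpen_Ioi
  · convert hb.inter isOpen_Ioi using 1
    ext x
    simp only [mem_inter_iff, mem_ofPred_eq, mem_Ioi]
    exact ⟨fun h ↦ ⟨h.1.2, h.2⟩, fun h ↦ ⟨⟨ha0.trans h.2.le, h.1⟩, h.2⟩⟩

end IsAdmissibleInterval

theorem psd_preserver_two_by_two_general
    (a : ℝ) (b : EReal) (I : Set ℝ)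
    (hI : (I = {x : ℝ | a < x ∧ (x : EReal) < b} ∧ ((|a| : ℝ) : EReal) ≤ b) ∨
          (I = {x : ℝ | a ≤ x ∧ (x : EReal) < b} ∧ -b ≤ (a : EReal) ∧ a ≤ 0))
    (f : ℝ → ℝ) :
    ((∀ A : Matrix (Fin 2) (Fin 2) ℝ, A.PosSemidef → (∀ i j, A i j ∈ I) →
        (A.map f).PosSemidef) ↔
      ((∀ x ∈ I, ∀ y ∈ I, 0 ≤ x → 0 ≤ y → f (Real.sqrt (x * y)) ^ 2 ≤ f x * f y) ∧
       (∀ x ∈ I, ∀ y ∈ I, |x| ≤ y → |f x| ≤ f y))) ∧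
    ((∀ A : Matrix (Fin 2) (Fin 2) ℝ, A.PosSemidef → (∀ i j, A i j ∈ I) →
        (A.map f).PosSemidef) →
      (((∀ x ∈ I, (x : EReal) ≠ -b → f x = 0) ∨ (∀ x ∈ I, 0 < x → 0 < f x)) ∧
        ContinuousOn f (I ∩ Set.Ioi 0))) := by
  have hI : IsAdmissibleInterval a b I := hI
  have hiff := forall_map_posSemidef_iff hI.ordConnected f
  refine ⟨hiff, fun hpres ↦ ?_⟩
  obtain ⟨hgeom, habs⟩ := hiff.1 hpres
  have hmono : MonotoneOn f (I ∩ Ioi 0) := fun x hx y hy hxy ↦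
    (le_abs_self _).trans (habs x hx.1 y hy.1 (by rwa [abs_of_pos hx.2]))
  have hnonneg : ∀ x ∈ I ∩ Ioi 0, 0 ≤ f x := fun x hx ↦
    (abs_nonneg _).trans (habs x hx.1 x hx.1 (abs_of_pos hx.2).le)
  have hlogc : GeomMidpointLogConvexOn f (I ∩ Ioi 0) := fun x hx y hy ↦
    hgeom x hx.1 y hy.1 hx.2.le hy.2.le
  have hSo := hI.isOpen_inter_Ioi
  have hSc : (I ∩ Ioi 0).OrdConnected := hI.ordConnected.inter ordConnected_Ioi
  by_cases hpos : ∀ x ∈ I, 0 < x → 0 < f x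
  · exact ⟨Or.inr hpos, hlogc.continuousOn hSo hSc (fun _ hx ↦ hx.2) hmono
      fun x hx ↦ hpos x hx.1 hx.2⟩
  push Not at hpos
  obtain ⟨x₀, hx₀, hx₀pos, hfx₀⟩ := hpos
  have hzero : ∀ y ∈ I ∩ Ioi 0, f y = 0 := fun y hy ↦
    hlogc.eq_zero_of_eq_zero hSo hSc hmono hnonneg ⟨hx₀, hx₀pos⟩ hx₀pos
      (hfx₀.antisymm (hnonneg x₀ ⟨hx₀, hx₀pos⟩)) hy
  refine ⟨Or.inl fun x hx hxb ↦ ?_, continuousOn_const.congr hzero⟩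
  obtain ⟨y, hy, hxy⟩ := hI.exists_gt_mem (hI.abs_mem hx hxb)
  have hfx := habs x hx y hy hxy.le
  rw [hzero y ⟨hy, (abs_nonneg x).trans_lt hxy⟩] at hfx
  exact abs_nonpos_iff.1 hfx

/-- **Vasudeva-type characterization in the 2 × 2 case.** Let `0 < b ≤ ∞` and `I = (a,b)`
with `|a| ≤ b`, or `I = [a,b)` with `-b ≤ a ≤ 0`.  Then `f[A]` is positive semidefinite
for every `2 × 2` positive semidefinite `A` with entries in `I` iff
`f(√(xy))² ≤ f(x)f(y)` for all `x,y ∈ I ∩ [0,∞)` and `|f(x)| ≤ f(y)` whenever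
`|x| ≤ y` in `I`.  In particular, if the former holds then either `f ≡ 0` on `I \ {-b}`
or `f > 0` on `I ∩ (0,∞)`, and `f` is continuous on `I ∩ (0,∞)`. -/
theorem psd_preserver_two_by_two
    (a : ℝ) (b : EReal) (hb : 0 < b) (I : Set ℝ)
    (hI : (I = {x : ℝ | a < x ∧ (x : EReal) < b} ∧ ((|a| : ℝ) : EReal) ≤ b) ∨
          (I = {x : ℝ | a ≤ x ∧ (x : EReal) < b} ∧ -b ≤ (a : EReal) ∧ a ≤ 0))
    (f : ℝ → ℝ) :
    ((∀ A : Matrix (Fin 2) (Fin 2) ℝ, A.PosSemidef → (∀ i j, A i j ∈ I) →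
        (A.map f).PosSemidef) ↔
      ((∀ x ∈ I, ∀ y ∈ I, 0 ≤ x → 0 ≤ y → f (Real.sqrt (x * y)) ^ 2 ≤ f x * f y) ∧
       (∀ x ∈ I, ∀ y ∈ I, |x| ≤ y → |f x| ≤ f y))) ∧
    ((∀ A : Matrix (Fin 2) (Fin 2) ℝ, A.PosSemidef → (∀ i j, A i j ∈ I) →
        (A.map f).PosSemidef) →
      (((∀ x ∈ I, (x : EReal) ≠ -b → f x = 0) ∨ (∀ x ∈ I, 0 < x → 0 < f x)) ∧
        ContinuousOn f (I ∩ Set.Ioi 0))) :=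
  psd_preserver_two_by_two_general a b I hI f
end

section
/- Let 0 < b ≤ ∞, and let I = (a,b) with |a| ≤ b, or I = [a,b) with |a| < b. Let f : I → ℝ. Then: (1) f[A] ∈ S_2^1 for every A ∈ P_2^1(I) if and only if for all x, y ∈ I ∩ [0,∞) and each choice of sign, whenever ±√(xy) ∈ I one has f(±√(xy))² = f(x)f(y). (2) Suppose 0 ∈ I, f(p) = 0 for some p ∈ I with p ≠ 0, and f[A] ∈ S_n^1 for every A ∈ P_n^1(I), for some n ≥ 2. Then f ≡ 0 on I. -/
/-!
A positive semidefinite rank-one `2 × 2` matrix is `!![x, s; s, y]` with `x, y ≥ 0` and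
`s² = xy`, and a `2 × 2` matrix has rank at most one iff its determinant vanishes. So `f[-]`
preserves rank one on `P_2^1(I)` iff `f(s)² = f(x) f(y)` whenever `s² = xy`; for `n > 2` the
same matrices sit inside `P_n^1(I)` after padding with zeros, which needs `0 ∈ I`.

For (2), the equation with `x = y = |s|` gives `f(s)² = f(|s|)²`, so the zero `q = |p|` may be
taken positive. For `0 ≤ t ≤ y` in `I`, writing `t² = (t²/y) · y` shows that `f(t) = 0` once
`f(t²/y) = 0`; as `(t²/y)/y = (t/y)²`, induction gives `f(t) = 0` whenever
`(t/y)^(2^k) ≤ q/y`, which holds for large `k` when `t < y`. Since `I` has no largest element,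
every `t ≥ 0` in `I` lies below some such `y`.
-/

open Matrix Set

namespace Matrix

variable {K : Type*} [Field K]

theorem rank_lt_card_iff_det_eq_zero {n : Type*} [Fintype n] [DecidableEq n] (A : Matrix n n K) :
    A.rank < Fintype.card n ↔ A.det = 0 := by
  refine ⟨fun h => by_contra fun hdet => (rank_of_det_ne_zero hdet).not_lt h, fun hdet => ?_⟩
  obtain ⟨v, hv, hAv⟩ := exists_mulVec_eq_zero_iff.mpr hdet
  have hker : 0 < Module.finrank K (LinearMap.ker A.mulVecLin) :=
    Module.finrank_pos_iff_exists_ne_zero.mpr ⟨⟨v, hAv⟩, by simpa [Subtype.ext_iff] using hv⟩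
  have := LinearMap.finrank_range_add_finrank_ker A.mulVecLin
  rw [Module.finrank_fintype_fun_eq_card] at this
  rw [rank]
  omega

theorem rank_le_one_iff_det_eq_zero (A : Matrix (Fin 2) (Fin 2) K) : A.rank ≤ 1 ↔ A.det = 0 := by
  rw [← rank_lt_card_iff_det_eq_zero, Fintype.card_fin, Nat.lt_succ_iff]

theorem det_submatrix_eq_zero_of_rank_le_one {n m : Type*} [Fintype m] {A : Matrix n m K}
    (hA : A.rank ≤ 1) (r : Fin 2 → n) (c : Fin 2 → m) : (A.submatrix r c).det = 0 :=
  (rank_le_one_iff_det_eq_zero _).mp ((rank_submatrix_le A r c).trans hA)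

theorem exists_vecMulVec_self_eq_of_sq_eq_mul {x y s : ℝ} (hx : 0 ≤ x) (hy : 0 ≤ y)
    (hs : s ^ 2 = x * y) : ∃ w : Fin 2 → ℝ, vecMulVec w w = !![x, s; s, y] := by
  rcases hx.eq_or_lt with rfl | hx
  · obtain rfl : s = 0 := by simpa using hs
    refine ⟨![0, √y], ?_⟩
    ext i j
    fin_cases i <;> fin_cases j <;> simp [vecMulVec_apply, Real.mul_self_sqrt hy]
  · have hsx : √x ≠ 0 := (Real.sqrt_pos.mpr hx).ne'
    refine ⟨![√x, s / √x], ?_⟩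
    ext i j
    fin_cases i <;> fin_cases j <;> simp [vecMulVec_apply, Real.mul_self_sqrt hx.le]
    all_goals field_simp
    rw [Real.sq_sqrt hx.le, hs]

end Matrix

def PreservesRankOne (ι : Type*) [Fintype ι] (I : Set ℝ) (f : ℝ → ℝ) : Prop :=
  ∀ A : Matrix ι ι ℝ, A.PosSemidef → A.rank ≤ 1 → (∀ i j, A i j ∈ I) →
    (A.map f).IsSymm ∧ (A.map f).rank ≤ 1

def PreservesSqEqMul (I : Set ℝ) (f : ℝ → ℝ) : Prop :=
  ∀ ⦃x y s⦄, x ∈ I → y ∈ I → s ∈ I → 0 ≤ x → 0 ≤ y → s ^ 2 = x * y → f s ^ 2 = f x * f y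

section

variable {I : Set ℝ} {f : ℝ → ℝ}

theorem preservesSqEqMul_iff_sqrt :
    PreservesSqEqMul I f ↔ ∀ x ∈ I, ∀ y ∈ I, 0 ≤ x → 0 ≤ y →
      (√(x * y) ∈ I → f √(x * y) ^ 2 = f x * f y) ∧
      (-√(x * y) ∈ I → f (-√(x * y)) ^ 2 = f x * f y) := by
  refine ⟨fun hf x hx y hy hx0 hy0 => ?_, fun hf x y s hx hy hs hx0 hy0 hsxy => ?_⟩
  · have hsq : √(x * y) ^ 2 = x * y := Real.sq_sqrt (mul_nonneg hx0 hy0)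
    exact ⟨fun h => hf hx hy h hx0 hy0 hsq, fun h => hf hx hy h hx0 hy0 (by rwa [neg_sq])⟩
  · rw [← Real.sq_sqrt (mul_nonneg hx0 hy0), sq_eq_sq_iff_eq_or_eq_neg] at hsxy
    rcases hsxy with rfl | rfl
    exacts [(hf x hx y hy hx0 hy0).1 hs, (hf x hx y hy hx0 hy0).2 hs]

theorem PreservesRankOne.preservesSqEqMul {ι : Type*} [Fintype ι] {e : Fin 2 → ι}
    (he : e.Injective) (h0 : e.Surjective ∨ 0 ∈ I) (hf : PreservesRankOne ι I f) :
    PreservesSqEqMul I f := by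
  intro x y s hx hy hs hx0 hy0 hsxy
  obtain ⟨w, hw⟩ := exists_vecMulVec_self_eq_of_sq_eq_mul hx0 hy0 hsxy
  set v : ι → ℝ := Function.extend e w 0
  set A := vecMulVec v v
  have hAe : A.submatrix e e = !![x, s; s, y] := by
    rw [← hw]
    ext i j
    simp [A, v, vecMulVec_apply, he.extend_apply]
  have hmem : ∀ i j, A i j ∈ I := by
    intro i j
    by_cases hij : (∃ k, e k = i) ∧ ∃ l, e l = j
    · obtain ⟨⟨k, rfl⟩, l, rfl⟩ := hij
      rw [← submatrix_apply A e e k l, hAe]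
      fin_cases k <;> fin_cases l <;> simpa
    · have hA0 : A i j = 0 := by
        rcases not_and_or.mp hij with h | h <;>
          simp [A, v, vecMulVec_apply, Function.extend_apply' _ _ _ h]
      rw [hA0]
      exact h0.resolve_left fun hsurj => hij ⟨hsurj i, hsurj j⟩
  have hrank := (hf A (by simpa using posSemidef_vecMulVec_self_star v)
    (rank_vecMulVec_le v v) hmem).2
  have hdet := det_submatrix_eq_zero_of_rank_le_one hrank e e
  rw [submatrix_map, hAe, det_fin_two] at hdet
  simp only [map_apply, of_apply, cons_val', cons_val_zero, cons_val_one, empty_val',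
    cons_val_fin_one] at hdet
  linear_combination -hdet

theorem PreservesSqEqMul.preservesRankOne_fin_two (hf : PreservesSqEqMul I f) :
    PreservesRankOne (Fin 2) I f := by
  intro A hA hrank hmem
  have hsymm : A.IsSymm := isHermitian_iff_isSymm.mp hA.isHermitian
  have h10 : A 1 0 = A 0 1 := hsymm.apply 0 1
  have hsq : A 0 1 ^ 2 = A 0 0 * A 1 1 := by
    have hdet := (rank_le_one_iff_det_eq_zero A).mp hrank
    rw [det_fin_two, h10] at hdet
    linear_combination -hdet
  have hfsq := hf (hmem 0 0) (hmem 1 1) (hmem 0 1) hA.diag_nonneg hA.diag_nonneg hsq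
  refine ⟨hsymm.map f, (rank_le_one_iff_det_eq_zero _).mpr ?_⟩
  rw [det_fin_two]
  simp only [map_apply, h10]
  linear_combination -hfsq

theorem preservesRankOne_fin_two_iff : PreservesRankOne (Fin 2) I f ↔ PreservesSqEqMul I f :=
  ⟨PreservesRankOne.preservesSqEqMul Function.injective_id (Or.inl Function.surjective_id),
    PreservesSqEqMul.preservesRankOne_fin_two⟩

namespace PreservesSqEqMul

variable (hf : PreservesSqEqMul I f)
include hf

theorem eq_zero_of_sq_eq_mul {x y s : ℝ} (hx : x ∈ I) (hy : y ∈ I) (hs : s ∈ I) (hx0 : 0 ≤ x)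
    (hy0 : 0 ≤ y) (hsxy : s ^ 2 = x * y) (hfx : f x = 0) : f s = 0 :=
  pow_eq_zero_iff two_ne_zero |>.mp (by rw [hf hx hy hs hx0 hy0 hsxy, hfx, zero_mul])

theorem apply_eq_zero_iff_apply_abs {s : ℝ} (hs : s ∈ I) (habs : |s| ∈ I) :
    f s = 0 ↔ f |s| = 0 := by
  have hsq : f s ^ 2 = f |s| ^ 2 := by
    rw [hf habs habs hs (abs_nonneg s) (abs_nonneg s) (by rw [abs_mul_abs_self, sq]), sq]
  rw [← pow_eq_zero_iff two_ne_zero, hsq, pow_eq_zero_iff two_ne_zero]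

theorem eq_zero_of_div_pow_le (hI : I.OrdConnected) (h0 : 0 ∈ I) {q y : ℝ} (hq : q ∈ I)
    (hq0 : 0 < q) (hfq : f q = 0) (hy : y ∈ I) (hy0 : 0 < y) (k : ℕ) :
    ∀ t, 0 ≤ t → t ≤ y → (t / y) ^ 2 ^ k ≤ q / y → f t = 0 := by
  have hmem : ∀ t, 0 ≤ t → t ≤ y → t ∈ I := fun t ht0 hty => hI.out h0 hy ⟨ht0, hty⟩
  induction k with
  | zero =>
    intro t ht0 hty htq
    rw [pow_zero, pow_one, div_le_div_iff_of_pos_right hy0] at htq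
    have hx : t ^ 2 / q ∈ I := hmem _ (by positivity) <| by
      rw [div_le_iff₀ hq0]
      nlinarith
    exact hf.eq_zero_of_sq_eq_mul hq hx (hmem t ht0 hty) hq0.le (by positivity)
      (by field_simp) hfq
  | succ k ih =>
    intro t ht0 hty htq
    have hxt : t ^ 2 / y ≤ t := by
      rw [div_le_iff₀ hy0]
      nlinarith
    have hfx : f (t ^ 2 / y) = 0 := ih _ (by positivity) (hxt.trans hty) <| by
      rwa [show t ^ 2 / y / y = (t / y) ^ 2 by ring, ← pow_mul, ← pow_succ']
    exact hf.eq_zero_of_sq_eq_mul (hmem _ (by positivity) (hxt.trans hty)) hy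
      (hmem t ht0 hty) (by positivity) hy0.le (by field_simp) hfx

theorem eq_zero_of_nonneg (hI : I.OrdConnected) (h0 : 0 ∈ I) (hgt : ∀ z ∈ I, ∃ y ∈ I, z < y)
    {q : ℝ} (hq : q ∈ I) (hq0 : 0 < q) (hfq : f q = 0) {z : ℝ} (hz : z ∈ I) (hz0 : 0 ≤ z) :
    f z = 0 := by
  obtain ⟨y, hy, hzy⟩ := hgt z hz
  have hy0 : 0 < y := hz0.trans_lt hzy
  have hr0 : 0 ≤ z / y := div_nonneg hz0 hy0.le
  have hr1 : z / y < 1 := (div_lt_one hy0).mpr hzy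
  obtain ⟨k, hk⟩ := exists_pow_lt_of_lt_one (div_pos hq0 hy0) hr1
  refine hf.eq_zero_of_div_pow_le hI h0 hq hq0 hfq hy hy0 k z hz0 hzy.le ?_
  calc (z / y) ^ 2 ^ k ≤ (z / y) ^ k := pow_le_pow_of_le_one hr0 hr1.le k.lt_two_pow_self.le
    _ ≤ q / y := hk.le

theorem eq_zero (hI : I.OrdConnected) (h0 : 0 ∈ I) (hgt : ∀ z ∈ I, ∃ y ∈ I, z < y)
    (habs : ∀ z ∈ I, |z| ∈ I) {p : ℝ} (hp : p ∈ I) (hp0 : p ≠ 0) (hfp : f p = 0) :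
    ∀ x ∈ I, f x = 0 := by
  have hfq : f |p| = 0 := (hf.apply_eq_zero_iff_apply_abs hp (habs p hp)).mp hfp
  intro x hx
  rw [hf.apply_eq_zero_iff_apply_abs hx (habs x hx)]
  exact hf.eq_zero_of_nonneg hI h0 hgt (habs p hp) (abs_pos.mpr hp0) hfq (habs x hx)
    (abs_nonneg x)

end PreservesSqEqMul

def IsAbsStableInterval (a : ℝ) (b : EReal) (I : Set ℝ) : Prop :=
  (I = {x : ℝ | a < x ∧ (x : EReal) < b} ∧ ((|a| : ℝ) : EReal) ≤ b) ∨
    (I = {x : ℝ | a ≤ x ∧ (x : EReal) < b} ∧ ((|a| : ℝ) : EReal) < b)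

namespace IsAbsStableInterval

variable {a : ℝ} {b : EReal} (hI : IsAbsStableInterval a b I)
include hI

theorem ordConnected : I.OrdConnected := by
  rcases hI with ⟨rfl, -⟩ | ⟨rfl, -⟩ <;>
    exact ⟨fun x hx y hy z hz => ⟨by linarith [hx.1, hz.1], lt_of_le_of_lt
      (EReal.coe_le_coe_iff.mpr hz.2) hy.2⟩⟩

theorem exists_gt {z : ℝ} (hz : z ∈ I) : ∃ y ∈ I, z < y := by
  rcases hI with ⟨rfl, -⟩ | ⟨rfl, -⟩ <;>
  · obtain ⟨y, hzy, hyb⟩ := EReal.exists_between_coe_real hz.2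
    have hzy : z < y := EReal.coe_lt_coe_iff.mp hzy
    exact ⟨y, ⟨by linarith [hz.1], hyb⟩, hzy⟩

theorem abs_mem {z : ℝ} (hz : z ∈ I) : |z| ∈ I := by
  rcases le_or_gt 0 z with hz0 | hz0
  · rwa [abs_of_nonneg hz0]
  rw [abs_of_neg hz0]
  rcases hI with ⟨rfl, hab⟩ | ⟨rfl, hab⟩
  · have ha : |a| = -a := abs_of_neg (hz.1.trans hz0)
    exact ⟨by linarith [hz.1], lt_of_lt_of_le (EReal.coe_lt_coe_iff.mpr (by linarith [hz.1])) hab⟩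
  · have ha : |a| = -a := abs_of_neg (hz.1.trans_lt hz0)
    exact ⟨by linarith [hz.1], lt_of_le_of_lt (EReal.coe_le_coe_iff.mpr (by linarith [hz.1])) hab⟩

end IsAbsStableInterval

end

theorem rank_one_two_by_two_functional_equation_general
    (a : ℝ) (b : EReal) (I : Set ℝ)
    (hI : (I = {x : ℝ | a < x ∧ (x : EReal) < b} ∧ ((|a| : ℝ) : EReal) ≤ b) ∨
          (I = {x : ℝ | a ≤ x ∧ (x : EReal) < b} ∧ ((|a| : ℝ) : EReal) < b))
    (f : ℝ → ℝ) :
    ((∀ A : Matrix (Fin 2) (Fin 2) ℝ, A.PosSemidef → A.rank ≤ 1 → (∀ i j, A i j ∈ I) →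
        (A.map f).IsSymm ∧ (A.map f).rank ≤ 1) ↔
      (∀ x ∈ I, ∀ y ∈ I, 0 ≤ x → 0 ≤ y →
        (Real.sqrt (x * y) ∈ I → f (Real.sqrt (x * y)) ^ 2 = f x * f y) ∧
        (-Real.sqrt (x * y) ∈ I → f (-Real.sqrt (x * y)) ^ 2 = f x * f y))) ∧
    (∀ n : ℕ, 2 ≤ n → (0 : ℝ) ∈ I → ∀ p ∈ I, p ≠ 0 → f p = 0 →
      (∀ A : Matrix (Fin n) (Fin n) ℝ, A.PosSemidef → A.rank ≤ 1 → (∀ i j, A i j ∈ I) →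
        (A.map f).IsSymm ∧ (A.map f).rank ≤ 1) →
      ∀ x ∈ I, f x = 0) := by
  have hI : IsAbsStableInterval a b I := hI
  refine ⟨preservesRankOne_fin_two_iff.trans preservesSqEqMul_iff_sqrt,
    fun n hn h0 p hp hp0 hfp hf => ?_⟩
  have hf' : PreservesSqEqMul I f :=
    PreservesRankOne.preservesSqEqMul (Fin.castLE_injective hn) (Or.inr h0) hf
  exact hf'.eq_zero hI.ordConnected h0 (fun _ => hI.exists_gt) (fun _ => hI.abs_mem) hp hp0 hfp

/-- Let `0 < b ≤ ∞` and `I = (a,b)` with `|a| ≤ b`, or `I = [a,b)` with `|a| < b`.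
(1) `f[A]` is symmetric of rank at most `1` for every `A ∈ P_2^1(I)` iff
`f(±√(xy))² = f(x)f(y)` for all `x,y ∈ I ∩ [0,∞)` whenever `±√(xy) ∈ I`.
(2) If `0 ∈ I`, `f(p) = 0` for some `0 ≠ p ∈ I`, and `f[-]` maps `P_n^1(I)` into
`S_n^1` for some `n ≥ 2`, then `f ≡ 0` on `I`. -/
theorem rank_one_two_by_two_functional_equation
    (a : ℝ) (b : EReal) (hb : 0 < b) (I : Set ℝ)
    (hI : (I = {x : ℝ | a < x ∧ (x : EReal) < b} ∧ ((|a| : ℝ) : EReal) ≤ b) ∨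
          (I = {x : ℝ | a ≤ x ∧ (x : EReal) < b} ∧ ((|a| : ℝ) : EReal) < b))
    (f : ℝ → ℝ) :
    ((∀ A : Matrix (Fin 2) (Fin 2) ℝ, A.PosSemidef → A.rank ≤ 1 → (∀ i j, A i j ∈ I) →
        (A.map f).IsSymm ∧ (A.map f).rank ≤ 1) ↔
      (∀ x ∈ I, ∀ y ∈ I, 0 ≤ x → 0 ≤ y →
        (Real.sqrt (x * y) ∈ I → f (Real.sqrt (x * y)) ^ 2 = f x * f y) ∧
        (-Real.sqrt (x * y) ∈ I → f (-Real.sqrt (x * y)) ^ 2 = f x * f y))) ∧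
    (∀ n : ℕ, 2 ≤ n → (0 : ℝ) ∈ I → ∀ p ∈ I, p ≠ 0 → f p = 0 →
      (∀ A : Matrix (Fin n) (Fin n) ℝ, A.PosSemidef → A.rank ≤ 1 → (∀ i j, A i j ∈ I) →
        (A.map f).IsSymm ∧ (A.map f).rank ≤ 1) →
      ∀ x ∈ I, f x = 0) :=
  rank_one_two_by_two_functional_equation_general a b I hI f
end

section
/- Let 0 < R ≤ ∞, let I = [0,R) or I = (-R,R), and let f, g : I → ℝ be such that g(x) ≠ 0 whenever x ≠ 0. Assume the limit c := lim_{x→0, x∈I, x≠0} f(x)/g(x) exists, and define h_c : I → ℝ by h_c(x) = f(x)/g(x) for x ≠ 0 and h_c(0) = c. Fix integers n ≥ 2 and 1 ≤ k ≤ n. Then: (1) if g[A] ∈ S_n^1 for all A ∈ P_n^1(I) and f[A] ∈ S_n^k for all A ∈ P_n^1(I), then h_c[A] ∈ S_n^k for all A ∈ P_n^1(I); conversely, if additionally f(0) = c·g(0) and h_c[A] ∈ S_n^k for all A ∈ P_n^1(I), then f[A] ∈ S_n^k for all A ∈ P_n^1(I). (2) If g[A] ∈ P_n^1 for all A ∈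 P_n^1(I) and f[A] ∈ P_n for all A ∈ P_n^1(I), then c ≥ 0 and h_c[A] ∈ P_n for all A ∈ P_n^1(I). -/
/-!
If `g[B] = a bᵀ` has rank one and the entries of `B` are nonzero, then
`h_c[B] = f[B] ⊙ a⁻¹ (b⁻¹)ᵀ = diag(a⁻¹) f[B] diag(b⁻¹)`, and such a diagonal congruence
can only lower the rank (and keeps positivity when `a = b`). A general `A = u uᵀ ∈ P_n^1(I)` is
the limit of `u_ε u_εᵀ`, where `u_ε` replaces the zero entries of `u` by `ε`: these matrices
have nonzero entries in `I`, agree with `A` wherever `A` is nonzero, and their remaining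
entries tend to `0` inside `I \ {0}`, so the hypothesis on `c` gives `h_c[u_ε u_εᵀ] → h_c[A]`.
Rank bounds and positive semidefiniteness survive the limit. Conversely, `f(0) = c g(0)`
makes `f[A] = h_c[A] ⊙ g[A]` exact. Finally `c ≥ 0` because `h_c[0]` is the constant matrix `c`.
-/

open Matrix Set Filter
open scoped Topology

namespace Matrix

variable {m n K : Type*}

theorem lt_rank_iff_exists_linearIndependent_mulVec [Fintype n] [Field K] (A : Matrix m n K)
    (k : ℕ) :
    k < A.rank ↔ ∃ x : Fin (k + 1) → n → K, LinearIndependent K fun b => A *ᵥ x b := by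
  constructor
  · intro hk
    obtain ⟨w, hw⟩ := exists_linearIndependent_of_le_finrank (R := K)
      (M := LinearMap.range A.mulVecLin) (Nat.succ_le_of_lt hk)
    choose x hx using fun b => LinearMap.mem_range.1 (w b).2
    have hAx : (fun b => A *ᵥ x b) = (LinearMap.range A.mulVecLin).subtype ∘ w := funext hx
    exact ⟨x, hAx ▸ hw.map' _ (Submodule.ker_subtype _)⟩
  · rintro ⟨x, hx⟩
    calc k < k + 1 := k.lt_succ_self
      _ = Module.finrank K (Submodule.span K (range fun b => A *ᵥ x b)) := by
        rw [finrank_span_eq_card hx, Fintype.card_fin]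
      _ ≤ A.rank := Submodule.finrank_mono <| Submodule.span_le.2 <| by
        rintro _ ⟨b, rfl⟩
        exact ⟨x b, rfl⟩

theorem exists_eq_vecMulVec_of_rank_le_one [Fintype n] [Field K] [Finite m]
    {A : Matrix m n K} (h : A.rank ≤ 1) : ∃ a b, A = vecMulVec a b := by
  classical
  obtain ⟨a, ha⟩ := finrank_le_one_iff.1 h
  choose b hb using fun j => ha ⟨A *ᵥ Pi.single j 1, Pi.single j 1, rfl⟩
  refine ⟨a, b, ext fun i j => ?_⟩
  simpa [vecMulVec_apply, mul_comm] using (congrFun (congrArg Subtype.val (hb j)) i).symm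

theorem rank_hadamard_vecMulVec_le [Fintype n] [CommRing K] [StrongRankCondition K] [Fintype m]
    (F : Matrix m n K) (a : m → K) (b : n → K) : (F ⊙ vecMulVec a b).rank ≤ F.rank := by
  classical
  have hF : F ⊙ vecMulVec a b = diagonal a * F * diagonal b := by
    ext i j
    simp [vecMulVec_apply, diagonal_mul, mul_diagonal]
    ring
  rw [hF]
  exact (rank_mul_le_left _ _).trans (rank_mul_le_right _ _)

theorem PosSemidef.hadamard_vecMulVec_self [Fintype n] {F : Matrix n n ℝ} (hF : F.PosSemidef)
    (v : n → ℝ) : (F ⊙ vecMulVec v v).PosSemidef :=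
  hF.hadamard (by simpa using posSemidef_vecMulVec_self_star v)

theorem PosSemidef.exists_eq_vecMulVec_self [Fintype n] {A : Matrix n n ℝ}
    (hA : A.PosSemidef) (h : A.rank ≤ 1) : ∃ u, A = vecMulVec u u := by
  obtain ⟨a, b, rfl⟩ := exists_eq_vecMulVec_of_rank_le_one h
  by_cases hb : b = 0
  · exact ⟨0, by simp [hb]⟩
  obtain ⟨q, hq : b q ≠ 0⟩ := Function.ne_iff.1 hb
  set t := a q / b q
  have ha : ∀ i, a i = t * b i := fun i => by
    have := hA.isHermitian.apply q i
    simp only [vecMulVec_apply, star_trivial] at this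
    rw [div_mul_eq_mul_div, eq_div_iff hq]
    linarith
  have ht : 0 ≤ t := by
    have := hA.diag_nonneg (i := q)
    rw [vecMulVec_apply, ha q, mul_assoc] at this
    exact nonneg_of_mul_nonneg_left this (mul_self_pos.2 hq)
  refine ⟨√t • b, ext fun i j => ?_⟩
  simp only [vecMulVec_apply, ha i, Pi.smul_apply, smul_eq_mul]
  linear_combination (b i * b j) * (Real.mul_self_sqrt ht).symm

theorem vecMulVec_abs_self {u : n → ℝ} (hu : ∀ i j, 0 ≤ u i * u j) :
    vecMulVec |u| |u| = vecMulVec u u :=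
  ext fun i j => by simp [vecMulVec_apply, ← abs_mul, abs_of_nonneg (hu i j)]

theorem isClosed_setOf_posSemidef [Fintype n] : IsClosed {M : Matrix n n ℝ | M.PosSemidef} := by
  simp_rw [posSemidef_iff_dotProduct_mulVec, ofPred_and, ofPred_forall]
  exact (isClosed_eq continuous_id.matrix_conjTranspose continuous_id).inter
    (isClosed_iInter fun x => isClosed_le continuous_const
      (continuous_const.dotProduct (continuous_id.matrix_mulVec continuous_const)))

theorem isOpen_setOf_lt_rank [Fintype n] {𝕜 : Type*} [NontriviallyNormedField 𝕜]
    [CompleteSpace 𝕜] [Fintype m] (k : ℕ) : IsOpen {B : Matrix m n 𝕜 | k < B.rank} := by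
  refine isOpen_iff_mem_nhds.2 fun B hB => ?_
  obtain ⟨x, hx⟩ := (lt_rank_iff_exists_linearIndependent_mulVec B k).1 hB
  have hcont : Continuous fun C : Matrix m n 𝕜 => fun b => C *ᵥ x b :=
    continuous_pi fun b => continuous_id.matrix_mulVec continuous_const
  exact (hcont.tendsto B).eventually hx.eventually |>.mono fun C hC =>
    (lt_rank_iff_exists_linearIndependent_mulVec C k).2 ⟨x, hC⟩

theorem isClosed_setOf_rank_le [Fintype n] {𝕜 : Type*} [NontriviallyNormedField 𝕜]
    [CompleteSpace 𝕜] [Fintype m] (k : ℕ) : IsClosed {B : Matrix m n 𝕜 | B.rank ≤ k} := by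
  rw [← isOpen_compl_iff]
  simpa only [compl_ofPred, not_le] using isOpen_setOf_lt_rank k

theorem tendsto_map_of_continuousWithinAt_zero {α : Type*} {l : Filter α} {S : Set ℝ}
    {h : ℝ → ℝ} (hh : ContinuousWithinAt h (S \ {0}) 0) {M : α → Matrix m n ℝ}
    {A : Matrix m n ℝ} (hM : Tendsto M l (𝓝 A)) (hMS : ∀ᶠ a in l, ∀ i j, M a i j ∈ S \ {0})
    (hMA : ∀ a i j, A i j ≠ 0 → M a i j = A i j) :
    Tendsto (fun a => (M a).map h) l (𝓝 (A.map h)) := by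
  refine tendsto_pi_nhds.2 fun i => tendsto_pi_nhds.2 fun j => ?_
  have hMij : Tendsto (fun a => M a i j) l (𝓝 (A i j)) :=
    ((continuous_id.matrix_elem i j).tendsto A).comp hM
  by_cases hA : A i j = 0
  · rw [hA] at hMij
    have hMij' : Tendsto (fun a => M a i j) l (𝓝[S \ {0}] 0) :=
      tendsto_nhdsWithin_iff.2 ⟨hMij, hMS.mono fun a ha => ha i j⟩
    simp only [map_apply, hA]
    exact hh.tendsto.comp hMij'
  · simp only [map_apply, hMA _ i j hA]
    exact tendsto_const_nhds

end Matrix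

section Approximation

variable {n : Type*}

noncomputable def fillZeros (u : n → ℝ) (ε : ℝ) : n → ℝ := fun i => if u i = 0 then ε else u i

theorem fillZeros_ne_zero (u : n → ℝ) {ε : ℝ} (hε : ε ≠ 0) (i : n) : fillZeros u ε i ≠ 0 := by
  unfold fillZeros
  split_ifs with h
  exacts [hε, h]

theorem fillZeros_nonneg {u : n → ℝ} (hu : 0 ≤ u) {ε : ℝ} (hε : 0 ≤ ε) : 0 ≤ fillZeros u ε :=
  fun i => by unfold fillZeros; split_ifs; exacts [hε, hu i]

theorem vecMulVec_fillZeros_of_ne_zero {u : n → ℝ} {i j : n} (h : vecMulVec u u i j ≠ 0)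
    (ε : ℝ) : vecMulVec (fillZeros u ε) (fillZeros u ε) i j = vecMulVec u u i j := by
  obtain ⟨hi, hj⟩ := mul_ne_zero_iff.1 h
  simp [fillZeros, vecMulVec_apply, hi, hj]

theorem tendsto_vecMulVec_fillZeros (u : n → ℝ) :
    Tendsto (fun ε => vecMulVec (fillZeros u ε) (fillZeros u ε)) (𝓝 0) (𝓝 (vecMulVec u u)) := by
  have hcont : Continuous (fillZeros u) :=
    continuous_pi fun i => by unfold fillZeros; split_ifs <;> fun_prop
  have h0 : fillZeros u 0 = u := funext fun i => by simp only [fillZeros]; split_ifs <;> simp [*]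
  simpa [h0] using (hcont.matrix_vecMulVec hcont).tendsto 0

theorem eventually_vecMulVec_fillZeros_mem [Finite n] {u : n → ℝ} {U : Set ℝ} (hU : IsOpen U)
    (hu : ∀ i j, vecMulVec u u i j ∈ U) :
    ∀ᶠ ε in 𝓝 0, ∀ i j, vecMulVec (fillZeros u ε) (fillZeros u ε) i j ∈ U := by
  simp only [eventually_all]
  exact fun i j => ((continuous_id.matrix_elem i j).tendsto _).comp
    (tendsto_vecMulVec_fillZeros u) |>.eventually (hU.mem_nhds (hu i j))

theorem Matrix.PosSemidef.exists_tendsto_ne_zero_of_rank_le_one [Fintype n] {I : Set ℝ}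
    {A : Matrix n n ℝ} (hA : A.PosSemidef) (hI : (∃ U, IsOpen U ∧ I = U ∩ Ici 0) ∨ IsOpen I)
    (hr : A.rank ≤ 1) (hAI : ∀ i j, A i j ∈ I) :
    ∃ M : ℝ → Matrix n n ℝ, Tendsto M (𝓝[>] 0) (𝓝 A) ∧ (∀ ε i j, A i j ≠ 0 → M ε i j = A i j) ∧
      ∀ᶠ ε in 𝓝[>] 0, (M ε).PosSemidef ∧ (M ε).rank ≤ 1 ∧ ∀ i j, M ε i j ∈ I \ {0} := by
  obtain ⟨u, hAu, hu⟩ : ∃ u, A = vecMulVec u u ∧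
      ∀ᶠ ε in 𝓝[>] 0, ∀ i j, vecMulVec (fillZeros u ε) (fillZeros u ε) i j ∈ I := by
    obtain ⟨u, rfl⟩ := hA.exists_eq_vecMulVec_self hr
    rcases hI with ⟨U, hU, rfl⟩ | hI
    -- On `[0, R)` take `u ≥ 0`, so that the filled-in entries stay nonnegative.
    · have hu : ∀ i j, 0 ≤ u i * u j := fun i j => (hAI i j).2
      rw [← vecMulVec_abs_self hu] at hAI ⊢
      refine ⟨|u|, rfl, ?_⟩
      filter_upwards [nhdsWithin_le_nhds (eventually_vecMulVec_fillZeros_mem hU fun i j =>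
        (hAI i j).1), self_mem_nhdsWithin] with ε hεU hε i j
      have hnonneg := fillZeros_nonneg (abs_nonneg u) (le_of_lt hε)
      exact ⟨hεU i j, mul_nonneg (hnonneg i) (hnonneg j)⟩
    · exact ⟨u, rfl, nhdsWithin_le_nhds (eventually_vecMulVec_fillZeros_mem hI hAI)⟩
  subst hAu
  refine ⟨fun ε => vecMulVec (fillZeros u ε) (fillZeros u ε),
    (tendsto_vecMulVec_fillZeros u).mono_left nhdsWithin_le_nhds,
    fun ε i j h => vecMulVec_fillZeros_of_ne_zero h ε, ?_⟩
  filter_upwards [hu, self_mem_nhdsWithin] with ε hεI hε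
  have hne := fillZeros_ne_zero u (ne_of_gt hε)
  exact ⟨by simpa using posSemidef_vecMulVec_self_star (fillZeros u ε), rank_vecMulVec_le _ _,
    fun i j => ⟨hεI i j, mul_ne_zero (hne i) (hne j)⟩⟩

theorem map_mem_of_forall_entries_ne_zero [Fintype n] {I : Set ℝ}
    (hI : (∃ U, IsOpen U ∧ I = U ∩ Ici 0) ∨ IsOpen I) {h : ℝ → ℝ}
    (hh : ContinuousWithinAt h (I \ {0}) 0) {S : Set (Matrix n n ℝ)} (hS : IsClosed S)
    (hP : ∀ B : Matrix n n ℝ, B.PosSemidef → B.rank ≤ 1 → (∀ i j, B i j ∈ I \ {0}) → B.map h ∈ S)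
    {A : Matrix n n ℝ} (hA : A.PosSemidef) (hr : A.rank ≤ 1) (hAI : ∀ i j, A i j ∈ I) :
    A.map h ∈ S := by
  obtain ⟨M, hMA, hMeq, hM⟩ := hA.exists_tendsto_ne_zero_of_rank_le_one hI hr hAI
  exact hS.mem_of_tendsto
    (tendsto_map_of_continuousWithinAt_zero hh hMA (hM.mono fun _ hε => hε.2.2) hMeq)
    (hM.mono fun _ hε => hP _ hε.1 hε.2.1 hε.2.2)

end Approximation

section Quotient

variable {m n : Type*} {f g : ℝ → ℝ} {c : ℝ}

/-- `h_c` in the paper. -/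
noncomputable def quotientExt (f g : ℝ → ℝ) (c x : ℝ) : ℝ := if x = 0 then c else f x / g x

theorem continuousWithinAt_quotientExt {S : Set ℝ}
    (hc : Tendsto (fun x => f x / g x) (𝓝[S \ {0}] 0) (𝓝 c)) :
    ContinuousWithinAt (quotientExt f g c) (S \ {0}) 0 := by
  rw [ContinuousWithinAt, quotientExt, if_pos rfl]
  exact hc.congr' (eventually_mem_nhdsWithin.mono fun x hx => (if_neg hx.2).symm)

theorem map_quotientExt_eq_hadamard {A : Matrix m n ℝ} (hA : ∀ i j, A i j ≠ 0) {a : m → ℝ}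
    {b : n → ℝ} (hg : A.map g = vecMulVec a b) :
    A.map (quotientExt f g c) = A.map f ⊙ vecMulVec a⁻¹ b⁻¹ := by
  ext i j
  have hgij : g (A i j) = a i * b j := congrFun (congrFun hg i) j
  simp [quotientExt, hA i j, hgij, vecMulVec_apply, div_eq_mul_inv, mul_comm]

theorem map_eq_hadamard_map_quotientExt {A : Matrix m n ℝ} (hf0 : f 0 = c * g 0)
    (hg : ∀ i j, A i j ≠ 0 → g (A i j) ≠ 0) : A.map f = A.map (quotientExt f g c) ⊙ A.map g := by
  ext i j
  by_cases hA : A i j = 0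
  · simp [quotientExt, hA, hf0]
  · simp [quotientExt, hA, div_mul_cancel₀ _ (hg i j hA)]

end Quotient

theorem exists_isOpen_eq_inter_Ici_or_isOpen_of_eq_Ico_or_Ioo {R : EReal} {I : Set ℝ}
    (hI : I = {x : ℝ | 0 ≤ x ∧ (x : EReal) < R} ∨
          I = {x : ℝ | -R < (x : EReal) ∧ (x : EReal) < R}) :
    (∃ U, IsOpen U ∧ I = U ∩ Ici 0) ∨ IsOpen I := by
  rcases hI with rfl | rfl
  · refine Or.inl ⟨{x : ℝ | (x : EReal) < R},
      isOpen_lt continuous_coe_real_ereal continuous_const, ?_⟩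
    ext x
    simp [and_comm]
  · exact Or.inr ((isOpen_lt continuous_const continuous_coe_real_ereal).inter
      (isOpen_lt continuous_coe_real_ereal continuous_const))

theorem zero_mem_of_eq_Ico_or_Ioo {R : EReal} (hR : 0 < R) {I : Set ℝ}
    (hI : I = {x : ℝ | 0 ≤ x ∧ (x : EReal) < R} ∨
          I = {x : ℝ | -R < (x : EReal) ∧ (x : EReal) < R}) : (0 : ℝ) ∈ I := by
  rcases hI with rfl | rfl <;> simp [hR]

theorem quotient_preserves_rank_bound_general
    (R : EReal) (hR : 0 < R) (I : Set ℝ)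
    (hI : I = {x : ℝ | 0 ≤ x ∧ (x : EReal) < R} ∨
          I = {x : ℝ | -R < (x : EReal) ∧ (x : EReal) < R})
    (f g : ℝ → ℝ) (hg : ∀ x ∈ I, x ≠ 0 → g x ≠ 0) (c : ℝ)
    (hc : Tendsto (fun x => f x / g x) (nhdsWithin 0 (I \ {0})) (nhds c))
    (n k : ℕ) (hn : 2 ≤ n) :
    ((∀ A : Matrix (Fin n) (Fin n) ℝ, A.PosSemidef → A.rank ≤ 1 → (∀ i j, A i j ∈ I) →
        (A.map g).IsSymm ∧ (A.map g).rank ≤ 1) →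
      (((∀ A : Matrix (Fin n) (Fin n) ℝ, A.PosSemidef → A.rank ≤ 1 → (∀ i j, A i j ∈ I) →
          (A.map f).IsSymm ∧ (A.map f).rank ≤ k) →
        (∀ A : Matrix (Fin n) (Fin n) ℝ, A.PosSemidef → A.rank ≤ 1 → (∀ i j, A i j ∈ I) →
          (A.map fun x => if x = 0 then c else f x / g x).IsSymm ∧
          (A.map fun x => if x = 0 then c else f x / g x).rank ≤ k)) ∧
       (f 0 = c * g 0 →
        (∀ A : Matrix (Fin n) (Fin n) ℝ, A.PosSemidef → A.rank ≤ 1 → (∀ i j, A i j ∈ I) →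
          (A.map fun x => if x = 0 then c else f x / g x).IsSymm ∧
          (A.map fun x => if x = 0 then c else f x / g x).rank ≤ k) →
        (∀ A : Matrix (Fin n) (Fin n) ℝ, A.PosSemidef → A.rank ≤ 1 → (∀ i j, A i j ∈ I) →
          (A.map f).IsSymm ∧ (A.map f).rank ≤ k)))) ∧
    ((∀ A : Matrix (Fin n) (Fin n) ℝ, A.PosSemidef → A.rank ≤ 1 → (∀ i j, A i j ∈ I) →
        (A.map g).PosSemidef ∧ (A.map g).rank ≤ 1) →
      (∀ A : Matrix (Fin n) (Fin n) ℝ, A.PosSemidef → A.rank ≤ 1 → (∀ i j, A i j ∈ I) →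
        (A.map f).PosSemidef) →
      (0 ≤ c ∧
        ∀ A : Matrix (Fin n) (Fin n) ℝ, A.PosSemidef → A.rank ≤ 1 → (∀ i j, A i j ∈ I) →
          (A.map fun x => if x = 0 then c else f x / g x).PosSemidef)) := by
  have hIopen := exists_isOpen_eq_inter_Ici_or_isOpen_of_eq_Ico_or_Ioo hI
  have hcont := continuousWithinAt_quotientExt hc
  have hsymm : ∀ {A : Matrix (Fin n) (Fin n) ℝ} (φ : ℝ → ℝ), A.PosSemidef → (A.map φ).IsSymm :=
    fun φ hA => (isHermitian_iff_isSymm.1 hA.isHermitian).map φ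
  refine ⟨fun hgS => ⟨fun hfS A hA hr hAI => ⟨hsymm _ hA, ?_⟩,
    fun hf0 hhS A hA hr hAI => ⟨hsymm _ hA, ?_⟩⟩, fun hgP hfP => ?_⟩
  · refine map_mem_of_forall_entries_ne_zero hIopen hcont (isClosed_setOf_rank_le k)
      (fun B hB hr hBI => ?_) hA hr hAI
    have hBI' : ∀ i j, B i j ∈ I := fun i j => (hBI i j).1
    obtain ⟨a, b, hab⟩ := exists_eq_vecMulVec_of_rank_le_one (hgS B hB hr hBI').2
    rw [map_quotientExt_eq_hadamard (fun i j => (hBI i j).2) hab]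
    exact (rank_hadamard_vecMulVec_le _ _ _).trans (hfS B hB hr hBI').2
  · obtain ⟨a, b, hab⟩ := exists_eq_vecMulVec_of_rank_le_one (hgS A hA hr hAI).2
    rw [map_eq_hadamard_map_quotientExt hf0 fun i j => hg _ (hAI i j), hab]
    exact (rank_hadamard_vecMulVec_le _ _ _).trans (hhS A hA hr hAI).2
  · have hpsd : ∀ A : Matrix (Fin n) (Fin n) ℝ, A.PosSemidef → A.rank ≤ 1 → (∀ i j, A i j ∈ I) →
        (A.map (quotientExt f g c)).PosSemidef := by
      refine fun A => map_mem_of_forall_entries_ne_zero hIopen hcont isClosed_setOf_posSemidef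
        fun B hB hr hBI => ?_
      have hBI' : ∀ i j, B i j ∈ I := fun i j => (hBI i j).1
      obtain ⟨v, hv⟩ := (hgP B hB hr hBI').1.exists_eq_vecMulVec_self (hgP B hB hr hBI').2
      rw [map_quotientExt_eq_hadamard (fun i j => (hBI i j).2) hv]
      exact (hfP B hB hr hBI').hadamard_vecMulVec_self _
    have h0 := hpsd 0 PosSemidef.zero (by simp) fun _ _ => zero_mem_of_eq_Ico_or_Ioo hR hI
    exact ⟨by simpa [quotientExt] using h0.diag_nonneg (i := ⟨0, by omega⟩), hpsd⟩

/-- Let `I = [0,R)` or `(-R,R)` with `0 < R ≤ ∞`, and `f, g : I → ℝ` with `g` nonzero off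
the origin.  Suppose `c = lim_{x → 0, x ∈ I \ {0}} f(x)/g(x)` exists, and let
`h_c(x) = f(x)/g(x)` for `x ≠ 0`, `h_c(0) = c`.  Fix `n ≥ 2`, `1 ≤ k ≤ n`.
(1) If `g[-] : P_n^1(I) → S_n^1` and `f[-] : P_n^1(I) → S_n^k`, then
`h_c[-] : P_n^1(I) → S_n^k`; conversely if moreover `f(0) = c·g(0)` and
`h_c[-] : P_n^1(I) → S_n^k` then `f[-] : P_n^1(I) → S_n^k`.
(2) If `g[-] : P_n^1(I) → P_n^1` and `f[-] : P_n^1(I) → P_n`, then `c ≥ 0` and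
`h_c[A]` is positive semidefinite for every `A ∈ P_n^1(I)`. -/
theorem quotient_preserves_rank_bound
    (R : EReal) (hR : 0 < R) (I : Set ℝ)
    (hI : I = {x : ℝ | 0 ≤ x ∧ (x : EReal) < R} ∨
          I = {x : ℝ | -R < (x : EReal) ∧ (x : EReal) < R})
    (f g : ℝ → ℝ) (hg : ∀ x ∈ I, x ≠ 0 → g x ≠ 0) (c : ℝ)
    (hc : Tendsto (fun x => f x / g x) (nhdsWithin 0 (I \ {0})) (nhds c))
    (n k : ℕ) (hn : 2 ≤ n) (hk1 : 1 ≤ k) (hkn : k ≤ n) :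
    ((∀ A : Matrix (Fin n) (Fin n) ℝ, A.PosSemidef → A.rank ≤ 1 → (∀ i j, A i j ∈ I) →
        (A.map g).IsSymm ∧ (A.map g).rank ≤ 1) →
      (((∀ A : Matrix (Fin n) (Fin n) ℝ, A.PosSemidef → A.rank ≤ 1 → (∀ i j, A i j ∈ I) →
          (A.map f).IsSymm ∧ (A.map f).rank ≤ k) →
        (∀ A : Matrix (Fin n) (Fin n) ℝ, A.PosSemidef → A.rank ≤ 1 → (∀ i j, A i j ∈ I) →
          (A.map fun x => if x = 0 then c else f x / g x).IsSymm ∧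
          (A.map fun x => if x = 0 then c else f x / g x).rank ≤ k)) ∧
       (f 0 = c * g 0 →
        (∀ A : Matrix (Fin n) (Fin n) ℝ, A.PosSemidef → A.rank ≤ 1 → (∀ i j, A i j ∈ I) →
          (A.map fun x => if x = 0 then c else f x / g x).IsSymm ∧
          (A.map fun x => if x = 0 then c else f x / g x).rank ≤ k) →
        (∀ A : Matrix (Fin n) (Fin n) ℝ, A.PosSemidef → A.rank ≤ 1 → (∀ i j, A i j ∈ I) →
          (A.map f).IsSymm ∧ (A.map f).rank ≤ k)))) ∧
    ((∀ A : Matrix (Fin n) (Fin n) ℝ, A.PosSemidef → A.rank ≤ 1 → (∀ i j, A i j ∈ I) →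
        (A.map g).PosSemidef ∧ (A.map g).rank ≤ 1) →
      (∀ A : Matrix (Fin n) (Fin n) ℝ, A.PosSemidef → A.rank ≤ 1 → (∀ i j, A i j ∈ I) →
        (A.map f).PosSemidef) →
      (0 ≤ c ∧
        ∀ A : Matrix (Fin n) (Fin n) ℝ, A.PosSemidef → A.rank ≤ 1 → (∀ i j, A i j ∈ I) →
          (A.map fun x => if x = 0 then c else f x / g x).PosSemidef)) :=
  quotient_preserves_rank_bound_general R hR I hI f g hg c hc n k hn
end

section
/- Let α ∈ (0,∞) be a real number and n ≥ 2 an integer. For u ∈ ℝ^n, let A_u := 1_{n×n} + u uᵀ. Then the following are equivalent: (1) there exists u ∈ (−1,1)^n such that the matrix ((1 + u_i u_j)^α)_{i,j=1}^n (the entrywise α-th power of A_u) is nonsingular; (2) either α is a positive integer with α ≥ n−1, or α is not an integer. -/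
/-!
If `α = m` is an integer with `m + 1 < n`, the binomial theorem writes `((1 + uᵢuⱼ)^m)` as a
product through `ℝ^(m+1)`, so it is singular. Otherwise take distinct `uᵢ ∈ [0, 1)`. A kernel
vector `c` gives a function `t ↦ ∑ⱼ cⱼ (1 + t uⱼ)^α` vanishing at the `n` points `uᵢ`. Dividing by
`(1 + t u_last)^α` and substituting `t ↦ t / (1 + t u_last)` turns the last summand into a
constant, and Rolle's theorem yields `n - 1` zeros of the derivative, a sum of the same shape with
exponent `α - 1` and coefficients `cⱼ α (uⱼ - u_last)`. Induction on `n`, using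
`α ∉ {0, …, n - 2}`, makes all coefficients vanish.
-/

open Function Matrix Set

namespace Matrix

theorem det_mul_eq_zero_of_card_lt {R ι κ : Type*} [CommRing R] [IsDomain R] [Fintype ι]
    [DecidableEq ι] [Fintype κ] (B : Matrix ι κ R) (C : Matrix κ ι R)
    (h : Fintype.card κ < Fintype.card ι) : (B * C).det = 0 := by
  by_contra hdet
  have := (rank_of_det_ne_zero hdet).symm.le.trans
    ((rank_mul_le_left B C).trans (rank_le_card_width B))
  omega

theorem of_one_add_mul_pow_eq_mul {R ι : Type*} [CommSemiring R] (u : ι → R) (m : ℕ) :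
    (of fun i j => (1 + u i * u j) ^ m) =
      (of fun i (k : Fin (m + 1)) => (m.choose k : R) * u i ^ (k : ℕ)) *
        of fun (k : Fin (m + 1)) j => u j ^ (k : ℕ) := by
  ext i j
  rw [mul_apply, of_apply, add_comm, add_pow, ← Fin.sum_univ_eq_sum_range]
  refine Finset.sum_congr rfl fun k _ => ?_
  simp only [of_apply, one_pow, mul_one, mul_pow]
  ring

theorem det_of_one_add_mul_pow_eq_zero {R ι : Type*} [CommRing R] [IsDomain R] [Fintype ι]
    [DecidableEq ι] (u : ι → R) {m : ℕ} (hm : m + 1 < Fintype.card ι) :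
    (of fun i j => (1 + u i * u j) ^ m).det = 0 := by
  rw [of_one_add_mul_pow_eq_mul]
  exact det_mul_eq_zero_of_card_lt _ _ (by rwa [Fintype.card_fin])

end Matrix

theorem exists_injective_deriv_eq_zero {f f' : ℝ → ℝ} {s : Set ℝ} (hs : s.OrdConnected)
    (hf : ∀ t ∈ s, HasDerivAt f (f' t) t) {m : ℕ} {z : Fin (m + 1) → ℝ}
    (hz : Injective z) (hzs : ∀ i, z i ∈ s) (hfz : ∀ i, f (z i) = 0) :
    ∃ η : Fin m → ℝ, Injective η ∧ (∀ i, η i ∈ s) ∧ ∀ i, f' (η i) = 0 := by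
  set w := z ∘ Tuple.sort z
  have hw : StrictMono w :=
    (Tuple.monotone_sort z).strictMono_of_injective (hz.comp (Tuple.sort z).injective)
  have hIcc (i : Fin m) : Icc (w i.castSucc) (w i.succ) ⊆ s := hs.out (hzs _) (hzs _)
  have rolle (i : Fin m) : ∃ t ∈ Ioo (w i.castSucc) (w i.succ), f' t = 0 :=
    exists_hasDerivAt_eq_zero (hw Fin.castSucc_lt_succ)
      (fun t ht => (hf t (hIcc i ht)).continuousAt.continuousWithinAt)
      (by simp only [w, Function.comp_apply, hfz])
      (fun t ht => hf t (hIcc i (Ioo_subset_Icc_self ht)))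
  choose η hη hη' using rolle
  have hηmono : StrictMono η := fun i j hij =>
    calc η i < w i.succ := (hη i).2
      _ ≤ w j.castSucc := hw.monotone (Fin.succ_le_castSucc_iff.mpr hij)
      _ < η j := (hη j).1
  exact ⟨η, hηmono.injective, fun i => hIcc i (Ioo_subset_Icc_self (hη i)), hη'⟩

theorem ordConnected_setOf_forall_one_add_mul_pos {ι : Type*} (a : ι → ℝ) :
    {t : ℝ | ∀ j, 0 < 1 + t * a j}.OrdConnected :=
  ⟨fun x hx y hy t ht j => by
    rcases le_total 0 (a j) with h | h
    · nlinarith [hx j, ht.1]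
    · nlinarith [hy j, ht.2]⟩

theorem hasDerivAt_sum_mul_one_add_mul_rpow {ι : Type*} [Fintype ι] (c a : ι → ℝ) (β : ℝ)
    {t : ℝ} (ht : ∀ j, 1 + t * a j ≠ 0) :
    HasDerivAt (fun t => ∑ j, c j * (1 + t * a j) ^ β)
      (∑ j, c j * (a j * β) * (1 + t * a j) ^ (β - 1)) t := by
  refine HasDerivAt.fun_sum fun j _ => ?_
  have h := ((hasDerivAt_mul_const (a j)).const_add 1).rpow_const (p := β) (x := t)
    (Or.inl (ht j))
  simpa only [mul_assoc] using h.const_mul (c j)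

theorem one_add_div_mul_sub {x b b' : ℝ} (h : 1 + x * b' ≠ 0) :
    1 + x / (1 + x * b') * (b - b') = (1 + x * b) / (1 + x * b') := by
  field_simp
  ring

theorem injOn_div_one_add_mul (b : ℝ) :
    InjOn (fun x : ℝ => x / (1 + x * b)) {x | 1 + x * b ≠ 0} := fun x hx x' hx' h => by
  rw [div_eq_div_iff hx hx'] at h
  linear_combination h

theorem exists_injective_sum_mul_one_add_mul_rpow_sub_one_eq_zero {m : ℕ} {β : ℝ}
    {b x c : Fin (m + 1) → ℝ} (hx : Injective x) (hpos : ∀ i j, 0 < 1 + x i * b j)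
    (hc : ∀ i, ∑ j, c j * (1 + x i * b j) ^ β = 0) :
    ∃ η : Fin m → ℝ, Injective η ∧ (∀ i j, 0 < 1 + η i * (b j - b (Fin.last m))) ∧
      ∀ i, ∑ j : Fin m, c j.castSucc * ((b j.castSucc - b (Fin.last m)) * β) *
        (1 + η i * (b j.castSucc - b (Fin.last m))) ^ (β - 1) = 0 := by
  set a := fun j => b j - b (Fin.last m)
  set y := fun i => x i / (1 + x i * b (Fin.last m))
  have hne (i) : 1 + x i * b (Fin.last m) ≠ 0 := (hpos i _).ne'
  have hya (i j) : 1 + y i * a j = (1 + x i * b j) / (1 + x i * b (Fin.last m)) :=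
    one_add_div_mul_sub (hne i)
  have hy : Injective y := fun i i' h =>
    hx (injOn_div_one_add_mul _ (hne i) (hne i') h)
  have hys (i j) : 0 < 1 + y i * a j := hya i j ▸ div_pos (hpos i j) (hpos i _)
  have hG (i) : ∑ j, c j * (1 + y i * a j) ^ β = 0 := by
    simp_rw [hya, Real.div_rpow (hpos i _).le (hpos i _).le, mul_div_assoc', ← Finset.sum_div,
      hc, zero_div]
  obtain ⟨η, hη, hηs, hη'⟩ := exists_injective_deriv_eq_zero
    (ordConnected_setOf_forall_one_add_mul_pos a)
    (fun t ht => hasDerivAt_sum_mul_one_add_mul_rpow c a β fun j => (ht j).ne') hy hys hG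
  refine ⟨η, hη, hηs, fun i => ?_⟩
  simpa [Fin.sum_univ_castSucc, a] using hη' i

theorem eq_zero_of_forall_sum_mul_one_add_mul_rpow_eq_zero {m : ℕ} {β : ℝ}
    (hβ : ∀ k : ℕ, k + 1 < m → β ≠ k) {b x c : Fin m → ℝ} (hb : Injective b)
    (hx : Injective x) (hpos : ∀ i j, 0 < 1 + x i * b j)
    (hc : ∀ i, ∑ j, c j * (1 + x i * b j) ^ β = 0) : c = 0 := by
  induction m generalizing β with
  | zero => exact Subsingleton.elim _ _
  | succ m ih =>
    obtain ⟨η, hη, hηpos, hη'⟩ :=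
      exists_injective_sum_mul_one_add_mul_rpow_sub_one_eq_zero hx hpos hc
    have hβ' (k : ℕ) (hk : k + 1 < m) : β - 1 ≠ k := fun h =>
      hβ (k + 1) (by omega) (by push_cast; linarith)
    have hb' : Injective fun j : Fin m => b j.castSucc - b (Fin.last m) :=
      fun j j' h => Fin.castSucc_injective _ (hb (sub_left_injective h))
    have hcoef := ih hβ' hb' hη (fun i j => hηpos i _) hη'
    have hinit (j : Fin m) : c j.castSucc = 0 := by
      have hβ0 : β ≠ 0 := by exact_mod_cast hβ 0 (by have := j.pos; omega)
      have hbj : b j.castSucc - b (Fin.last m) ≠ 0 :=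
        sub_ne_zero.2 (hb.ne (Fin.castSucc_lt_last j).ne)
      simpa [hβ0, hbj] using congrFun hcoef j
    have hlast : c (Fin.last m) = 0 := by
      have := hc 0
      simp only [Fin.sum_univ_castSucc, hinit, zero_mul, Finset.sum_const_zero, zero_add] at this
      exact (mul_eq_zero.1 this).resolve_right (Real.rpow_pos_of_pos (hpos 0 _) β).ne'
    ext j
    induction j using Fin.lastCases with
    | last => exact hlast
    | cast j => exact hinit j

theorem det_of_one_add_mul_rpow_ne_zero {m : ℕ} {β : ℝ} (hβ : ∀ k : ℕ, k + 1 < m → β ≠ k)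
    {b x : Fin m → ℝ} (hb : Injective b) (hx : Injective x)
    (hpos : ∀ i j, 0 < 1 + x i * b j) : (of fun i j => (1 + x i * b j) ^ β).det ≠ 0 := by
  intro hdet
  obtain ⟨c, hc0, hc⟩ := exists_mulVec_eq_zero_iff.2 hdet
  refine hc0 (eq_zero_of_forall_sum_mul_one_add_mul_rpow_eq_zero hβ hb hx hpos fun i => ?_)
  simpa only [mulVec, dotProduct, of_apply, mul_comm (c _), Pi.zero_apply] using congrFun hc i

theorem entrywise_power_nonsingular_iff_general
    (α : ℝ) (n : ℕ) :
    (∃ u : Fin n → ℝ, (∀ i, u i ∈ Set.Ioo (-1 : ℝ) 1) ∧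
      (Matrix.of fun i j => (1 + u i * u j) ^ α).det ≠ 0) ↔
    ((∃ m : ℕ, (m : ℝ) = α ∧ n - 1 ≤ m) ∨ (∀ m : ℕ, (m : ℝ) ≠ α)) := by
  constructor
  · rintro ⟨u, -, hdet⟩
    by_contra! h
    obtain ⟨hsmall, m, rfl⟩ := h
    refine hdet ?_
    simp only [Real.rpow_natCast]
    have := hsmall m rfl
    exact det_of_one_add_mul_pow_eq_zero u (by rw [Fintype.card_fin]; omega)
  · intro h
    have hα (k : ℕ) (hk : k + 1 < n) : α ≠ k := by
      rintro rfl
      rcases h with ⟨m, hm, hnm⟩ | h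
      · have := Nat.cast_injective hm
        omega
      · exact h k rfl
    set u : Fin n → ℝ := fun i => i / n
    have hu_nonneg (i) : 0 ≤ u i := by positivity
    have hu (i) : u i ∈ Ioo (-1) 1 :=
      ⟨by linarith [hu_nonneg i],
        (div_lt_one (by exact_mod_cast i.pos)).2 (by exact_mod_cast i.isLt)⟩
    have hu_inj : Injective u := fun i j h =>
      Fin.ext (Nat.cast_injective ((div_left_inj' (by exact_mod_cast i.pos.ne')).1 h))
    exact ⟨u, hu, det_of_one_add_mul_rpow_ne_zero hα hu_inj hu_inj fun i j => by positivity⟩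

/-- Let `α > 0` and `n ≥ 2`.  There exists `u ∈ (-1,1)ⁿ` such that the entrywise `α`-th
power of `1_{n×n} + uuᵀ`, i.e. the matrix `((1 + uᵢuⱼ)^α)`, is nonsingular, iff either
`α` is a positive integer with `α ≥ n-1`, or `α` is not an integer. -/
theorem entrywise_power_nonsingular_iff
    (α : ℝ) (hα : 0 < α) (n : ℕ) (hn : 2 ≤ n) :
    (∃ u : Fin n → ℝ, (∀ i, u i ∈ Set.Ioo (-1 : ℝ) 1) ∧
      (Matrix.of fun i j => (1 + u i * u j) ^ α).det ≠ 0) ↔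
    ((∃ m : ℕ, (m : ℝ) = α ∧ n - 1 ≤ m) ∨ (∀ m : ℕ, (m : ℝ) ≠ α)) :=
  entrywise_power_nonsingular_iff_general α n
end

section
/- Let 0 < R ≤ ∞, let I = [0,R) or I = (-R,R), and let f : I → ℝ with f not identically zero on I. Fix integers n ≥ 3 and 1 ≤ k < l ≤ n, and assume additionally that k < n−1 in the case I = (-R,R). Then the following are equivalent: (1) f[A] ∈ S_n^k for every n×n real symmetric matrix A of rank at most l with entries in I; (2) f[A] ∈ S_n^k for every A ∈ P_n^l(I); (3) f ≡ c on I for some nonzero constant c. Moreover, f[A] ∈ P_n^k for every A ∈ P_n^l(I) if and only if f ≡ c on I for some constant c > 0. -/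
open Matrix Set

/-!
Repeating rows and columns of a matrix preserves positivity, rank and the set of entries, so the
hypothesis passes to every index set with at most `n` elements. On such index sets take the Gram
matrix `X` of `r` disjoint blocks, each block being `(√a)` or `(√y, -√y)`, possibly bordered by a
zero row and column. Then `rank X ≤ r`, and `f[X]` equals `f 0` except on the graph of a
permutation, where it equals `f a`, resp. `f (-y)`. If `f 0 = 0`, this is a scaled permutation
matrix; if `f 0 ≠ 0`, the zero border makes `f 0 • 1 + (t - f 0) • P` (with `P` supported away from
the border) invertible as soon as `t ≠ f 0`. Choosing `r` so that these matrices have size `k + 1`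
or `k + 2` while `r ≤ l` shows that `f` equals `f 0` on `I ∩ [0, ∞)` and then on `I ∩ (-∞, 0]`.
-/

/-- `f[-]` maps `P_m^l(I)` into the matrices of rank at most `k`. -/
def MapsPSDRankLE (f : ℝ → ℝ) (I : Set ℝ) (m : Type*) [Fintype m] (l k : ℕ) : Prop :=
  ∀ A : Matrix m m ℝ, A.PosSemidef → A.rank ≤ l → (∀ i j, A i j ∈ I) → (A.map f).rank ≤ k

theorem rank_smul_permMatrix {κ : Type*} [Fintype κ] [DecidableEq κ] (σ : Equiv.Perm κ) {t : ℝ}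
    (ht : t ≠ 0) : (t • σ.permMatrix ℝ).rank = Fintype.card κ := by
  refine rank_of_det_ne_zero ?_
  rw [det_smul, det_permutation]
  exact mul_ne_zero (pow_ne_zero _ ht) (by simp)

theorem rank_eq_card_of_mulVec_eq_zero {κ : Type*} [Fintype κ] [DecidableEq κ] {M : Matrix κ κ ℝ}
    (h : ∀ v, M *ᵥ v = 0 → v = 0) : M.rank = Fintype.card κ :=
  rank_of_isUnit M <| mulVec_injective_iff_isUnit.mp fun v w hvw =>
    sub_eq_zero.mp <| h _ <| by rw [mulVec_sub, hvw, sub_self]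

theorem rank_eq_card_add_one_of_border {κ : Type*} [Fintype κ] [DecidableEq κ] (σ : Equiv.Perm κ)
    {t c : ℝ} (hc : c ≠ 0) (htc : t ≠ c) {M : Matrix (Option κ) (Option κ) ℝ}
    (hrow_none : ∀ i, M none i = c) (hcol_none : ∀ p, M (some p) none = c)
    (hsome : ∀ p q, M (some p) (some q) = if q = σ p then t else c) :
    M.rank = Fintype.card κ + 1 := by
  rw [← Fintype.card_option]
  refine rank_eq_card_of_mulVec_eq_zero fun v hv => ?_
  have hsum : ∑ i, v i = 0 := by
    have := congrFun hv none
    simp only [mulVec, dotProduct, hrow_none, ← Finset.mul_sum, Pi.zero_apply] at this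
    exact (mul_eq_zero.mp this).resolve_left hc
  have hrow : ∀ p, c * ∑ i, v i + (t - c) * v (some (σ p)) = 0 := by
    intro p
    have := congrFun hv (some p)
    simp only [mulVec, dotProduct, Fintype.sum_option, hsome, hcol_none, Pi.zero_apply] at this
    have hsplit : ∀ q, (if q = σ p then t else c) * v (some q) =
        c * v (some q) + if q = σ p then (t - c) * v (some q) else 0 := by
      intro q; split_ifs <;> ring
    rw [Finset.sum_congr rfl fun q _ => hsplit q, Finset.sum_add_distrib, ← Finset.mul_sum,
      Finset.sum_ite_eq' Finset.univ] at this
    rw [Fintype.sum_option]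
    simp only [Finset.mem_univ, if_true] at this
    linarith
  have hv_some : ∀ q, v (some q) = 0 := fun q => by
    simpa [hsum, sub_ne_zero.mpr htc] using hrow (σ.symm q)
  have hv_none : v none = 0 := by simpa [Fintype.sum_option, hv_some] using hsum
  ext (_ | q)
  · exact hv_none
  · exact hv_some q

section BlockGram
variable (ρ : Type*) [Fintype ρ] [DecidableEq ρ] {β : Type*} (w : β → ℝ)

def blockFactor : Matrix (Option (ρ × β)) ρ ℝ :=
  Matrix.of fun i c => Option.elim i 0 fun p => if p.1 = c then w p.2 else 0

def blockGram : Matrix (Option (ρ × β)) (Option (ρ × β)) ℝ :=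
  blockFactor ρ w * (blockFactor ρ w)ᴴ

variable {ρ w}

@[simp] theorem blockGram_none_left (i : Option (ρ × β)) : blockGram ρ w none i = 0 := by
  simp [blockGram, blockFactor, mul_apply]

@[simp] theorem blockGram_none_right (i : Option (ρ × β)) : blockGram ρ w i none = 0 := by
  simp [blockGram, blockFactor, mul_apply]

theorem blockGram_some_some (p q : ρ × β) :
    blockGram ρ w (some p) (some q) = if p.1 = q.1 then w p.2 * w q.2 else 0 := by
  simp [blockGram, blockFactor, mul_apply, ite_mul, eq_comm]

theorem posSemidef_blockGram [Fintype β] : (blockGram ρ w).PosSemidef :=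
  posSemidef_self_mul_conjTranspose _

theorem rank_blockGram_le [Fintype β] : (blockGram ρ w).rank ≤ Fintype.card ρ :=
  (rank_mul_le_left _ _).trans (rank_le_card_width _)

theorem blockGram_mem {I : Set ℝ} (h0 : (0 : ℝ) ∈ I) (hw : ∀ s s', w s * w s' ∈ I) :
    ∀ i j, blockGram ρ w i j ∈ I := by
  rintro (_ | p) (_ | q)
  all_goals simp only [blockGram_none_left, blockGram_none_right, blockGram_some_some]
  all_goals first | exact h0 | split_ifs; exacts [hw _ _, h0]

end BlockGram

namespace MapsPSDRankLE
variable {f : ℝ → ℝ} {I : Set ℝ} {m : Type*} [Fintype m] {l k : ℕ}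
  {ρ β : Type*} [Fintype ρ] [DecidableEq ρ] [Fintype β] [DecidableEq β] {w : β → ℝ} {t : ℝ}

theorem of_card_le {κ : Type*} [Fintype κ] [Nonempty κ] (H : MapsPSDRankLE f I m l k)
    (h : Fintype.card κ ≤ Fintype.card m) : MapsPSDRankLE f I κ l k := by
  intro X hX hXl hXI
  obtain ⟨s⟩ := Function.Embedding.nonempty_of_card_le h
  set r := Function.invFun s
  have hrs : r ∘ s = id := Function.invFun_comp s.injective
  calc (X.map f).rank = (((X.submatrix r r).map f).submatrix s s).rank := by
        rw [submatrix_map, submatrix_submatrix, hrs, submatrix_id_id]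
    _ ≤ ((X.submatrix r r).map f).rank := rank_submatrix_le _ _ _
    _ ≤ k := H _ (hX.submatrix r) ((rank_submatrix_le _ _ _).trans hXl) fun _ _ => hXI _ _

theorem eq_zero_of_blockGram (H : MapsPSDRankLE f I m l k) (hf0 : f 0 = 0)
    (hcard : Fintype.card (ρ × β) ≤ Fintype.card m) (hk : k < Fintype.card (ρ × β))
    (hl : Fintype.card ρ ≤ l) (hI : ∀ i j, blockGram ρ w i j ∈ I) (σ : Equiv.Perm (ρ × β))
    (hf : ∀ p q, f (blockGram ρ w (some p) (some q)) = if q = σ p then t else f 0) : t = 0 := by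
  by_contra ht
  have : Nonempty (ρ × β) := Fintype.card_pos_iff.mp (by omega)
  set X := (blockGram ρ w).submatrix some some
  have hmap : X.map f = t • σ.permMatrix ℝ := by
    ext p q
    simp [X, hf, hf0, PEquiv.toMatrix_apply, eq_comm]
  have := H.of_card_le hcard X (posSemidef_blockGram.submatrix _)
    ((rank_submatrix_le _ _ _).trans (rank_blockGram_le.trans hl)) fun _ _ => hI _ _
  rw [hmap, rank_smul_permMatrix σ ht] at this
  omega

theorem eq_apply_zero_of_blockGram (H : MapsPSDRankLE f I m l k) (hf0 : f 0 ≠ 0)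
    (hcard : Fintype.card (ρ × β) + 1 ≤ Fintype.card m) (hk : k ≤ Fintype.card (ρ × β))
    (hl : Fintype.card ρ ≤ l) (hI : ∀ i j, blockGram ρ w i j ∈ I) (σ : Equiv.Perm (ρ × β))
    (hf : ∀ p q, f (blockGram ρ w (some p) (some q)) = if q = σ p then t else f 0) :
    t = f 0 := by
  by_contra ht
  have := (H.of_card_le (by rwa [Fintype.card_option])) _ posSemidef_blockGram
    (rank_blockGram_le.trans hl) hI
  rw [rank_eq_card_add_one_of_border σ hf0 ht (by simp) (by simp) fun p q => by simp [hf]] at this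
  omega

theorem apply_eq_apply_zero_of_nonneg (H : MapsPSDRankLE f I m l k) (hkl : k < l)
    (h0 : (0 : ℝ) ∈ I) (hlm : l ≤ Fintype.card m) {a : ℝ} (ha : a ∈ I)
    (ha0 : 0 ≤ a) : f a = f 0 := by
  set w : Unit → ℝ := fun _ => √a
  have hw : ∀ s s', w s * w s' = a := fun _ _ => Real.mul_self_sqrt ha0
  have hI (ρ : Type) [Fintype ρ] [DecidableEq ρ] : ∀ i j, blockGram ρ w i j ∈ I :=
    blockGram_mem h0 fun s s' => (hw s s').symm ▸ ha
  have hf (ρ : Type) [Fintype ρ] [DecidableEq ρ] (p q : ρ × Unit) :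
      f (blockGram ρ w (some p) (some q)) = if q = Equiv.refl _ p then f a else f 0 := by
    simp [blockGram_some_some, hw, Prod.ext_iff, eq_comm, apply_ite f]
  by_cases hf0 : f 0 = 0
  · rw [hf0]
    exact H.eq_zero_of_blockGram (ρ := Fin (k + 1)) hf0 (by simp; omega) (by simp)
      (by simp; omega) (hI _) _ (hf _)
  · exact H.eq_apply_zero_of_blockGram (ρ := Fin k) hf0 (by simp; omega) (by simp)
      (by simp; omega) (hI _) _ (hf _)

theorem apply_neg_eq_apply_zero (H : MapsPSDRankLE f I m l k) (hkl : k < l)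
    (h0 : (0 : ℝ) ∈ I) (hkm : k + 2 ≤ Fintype.card m)
    (hpos : ∀ a ∈ I, 0 ≤ a → f a = f 0) {y : ℝ} (hy : y ∈ I) (hy' : -y ∈ I) (hy0 : 0 ≤ y) :
    f (-y) = f 0 := by
  set w : Bool → ℝ := fun s => if s then √y else -√y
  have hw : ∀ s s', w s * w s' = if s = s' then y else -y := by
    have := Real.mul_self_sqrt hy0
    intro s s'; cases s <;> cases s' <;> simp [w, this]
  have hI (ρ : Type) [Fintype ρ] [DecidableEq ρ] : ∀ i j, blockGram ρ w i j ∈ I :=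
    blockGram_mem h0 fun s s' => by rw [hw]; split_ifs; exacts [hy, hy']
  have hf (ρ : Type) [Fintype ρ] [DecidableEq ρ] (p q : ρ × Bool) :
      f (blockGram ρ w (some p) (some q)) =
        if q = (Equiv.prodCongr (Equiv.refl ρ) Equiv.boolNot) p then f (-y) else f 0 := by
    obtain ⟨c, s⟩ := p
    obtain ⟨c', s'⟩ := q
    by_cases hc : c = c'
    · subst hc
      cases s <;> cases s' <;> simp [blockGram_some_some, hw, hpos y hy hy0, Equiv.boolNot]
    · simp [blockGram_some_some, hc, Ne.symm hc]
  by_cases hf0 : f 0 = 0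
  · rw [hf0]
    exact H.eq_zero_of_blockGram (ρ := Fin ((k + 2) / 2)) hf0 (by simp; omega) (by simp; omega)
      (by simp; omega) (hI _) _ (hf _)
  · exact H.eq_apply_zero_of_blockGram (ρ := Fin ((k + 1) / 2)) hf0 (by simp; omega)
      (by simp; omega) (by simp; omega) (hI _) _ (hf _)

theorem apply_eq_apply_zero (H : MapsPSDRankLE f I m l k) (hkl : k < l)
    (hlm : l ≤ Fintype.card m) (h0 : (0 : ℝ) ∈ I)
    (hI : (∀ x ∈ I, 0 ≤ x) ∨ ((∀ x ∈ I, -x ∈ I) ∧ k + 2 ≤ Fintype.card m)) {x : ℝ}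
    (hx : x ∈ I) : f x = f 0 := by
  have hpos : ∀ a ∈ I, 0 ≤ a → f a = f 0 := fun a ha ha0 =>
    H.apply_eq_apply_zero_of_nonneg hkl h0 hlm ha ha0
  rcases le_or_gt 0 x with hx0 | hx0
  · exact hpos x hx hx0
  obtain hnonneg | ⟨hneg, hkm⟩ := hI
  · exact absurd (hnonneg x hx) (not_le.mpr hx0)
  · simpa using H.apply_neg_eq_apply_zero hkl h0 hkm hpos (hneg x hx) (by simpa using hx)
      (by linarith)

end MapsPSDRankLE

section ConstMatrix
variable {ι : Type*} [Fintype ι]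

theorem rank_const_le_one (c : ℝ) : (Matrix.of fun _ _ : ι => c).rank ≤ 1 := by
  have : (Matrix.of fun _ _ : ι => c) = vecMulVec (fun _ => c) (fun _ => 1) := by
    ext; simp [vecMulVec_apply]
  exact this ▸ rank_vecMulVec_le _ _

theorem posSemidef_const {c : ℝ} (hc : 0 ≤ c) : (Matrix.of fun _ _ : ι => c).PosSemidef := by
  have : (Matrix.of fun _ _ : ι => c) = vecMulVec (fun _ => √c) (star fun _ => √c) := by
    ext; simp [vecMulVec_apply, Real.mul_self_sqrt hc]
  exact this ▸ posSemidef_vecMulVec_self_star _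

end ConstMatrix

theorem map_eq_const_of_eqOn {ι : Type*} {f : ℝ → ℝ} {I : Set ℝ} {c : ℝ} (hc : ∀ x ∈ I, f x = c)
    {A : Matrix ι ι ℝ} (hA : ∀ i j, A i j ∈ I) : A.map f = Matrix.of fun _ _ => c := by
  ext i j; exact hc _ (hA i j)

theorem zero_mem_and_nonneg_or_neg_mem (R : EReal) (hR : 0 < R) (I : Set ℝ)
    (hI : I = {x : ℝ | 0 ≤ x ∧ (x : EReal) < R} ∨
          I = {x : ℝ | -R < (x : EReal) ∧ (x : EReal) < R}) {n k : ℕ}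
    (hcase : I = {x : ℝ | -R < (x : EReal) ∧ (x : EReal) < R} → k < n - 1) :
    (0 : ℝ) ∈ I ∧ ((∀ x ∈ I, 0 ≤ x) ∨ ((∀ x ∈ I, -x ∈ I) ∧ k + 2 ≤ n)) := by
  rcases hI with rfl | rfl
  · exact ⟨⟨le_rfl, by simpa using hR⟩, .inl fun x hx => hx.1⟩
  · refine ⟨⟨by simpa using hR, by simpa using hR⟩,
      .inr ⟨fun x hx => ⟨?_, ?_⟩, by have := hcase rfl; omega⟩⟩
    · simpa [EReal.neg_lt_neg_iff] using hx.2
    · simpa [EReal.neg_lt_comm] using hx.1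

theorem low_rank_target_forces_constant_general
    (R : EReal) (hR : 0 < R) (I : Set ℝ)
    (hI : I = {x : ℝ | 0 ≤ x ∧ (x : EReal) < R} ∨
          I = {x : ℝ | -R < (x : EReal) ∧ (x : EReal) < R})
    (f : ℝ → ℝ) (hf : ∃ x ∈ I, f x ≠ 0)
    (n k l : ℕ) (hk : 1 ≤ k) (hkl : k < l) (hln : l ≤ n)
    (hcase : I = {x : ℝ | -R < (x : EReal) ∧ (x : EReal) < R} → k < n - 1) :
    ((∀ A : Matrix (Fin n) (Fin n) ℝ, A.IsSymm → A.rank ≤ l → (∀ i j, A i j ∈ I) →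
        (A.map f).IsSymm ∧ (A.map f).rank ≤ k) ↔
      (∃ c : ℝ, c ≠ 0 ∧ ∀ x ∈ I, f x = c)) ∧
    ((∀ A : Matrix (Fin n) (Fin n) ℝ, A.PosSemidef → A.rank ≤ l → (∀ i j, A i j ∈ I) →
        (A.map f).IsSymm ∧ (A.map f).rank ≤ k) ↔
      (∃ c : ℝ, c ≠ 0 ∧ ∀ x ∈ I, f x = c)) ∧
    ((∀ A : Matrix (Fin n) (Fin n) ℝ, A.PosSemidef → A.rank ≤ l → (∀ i j, A i j ∈ I) →
        (A.map f).PosSemidef ∧ (A.map f).rank ≤ k) ↔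
      (∃ c : ℝ, 0 < c ∧ ∀ x ∈ I, f x = c)) := by
  obtain ⟨h0, hshape⟩ := zero_mem_and_nonneg_or_neg_mem R hR I hI hcase
  have hexists (H : MapsPSDRankLE f I (Fin n) l k) : ∃ c : ℝ, c ≠ 0 ∧ ∀ x ∈ I, f x = c := by
    have hconst x (hx : x ∈ I) : f x = f 0 :=
      H.apply_eq_apply_zero hkl (by simpa) h0 (by simpa using hshape) hx
    obtain ⟨x, hx, hfx⟩ := hf
    exact ⟨f 0, hconst x hx ▸ hfx, hconst⟩
  refine ⟨⟨fun H => hexists fun A hA hAl hAI =>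
      (H A (isHermitian_iff_isSymm.mp hA.isHermitian) hAl hAI).2, ?_⟩,
    ⟨fun H => hexists fun A hA hAl hAI => (H A hA hAl hAI).2, ?_⟩, ⟨fun H => ?_, ?_⟩⟩
  iterate 2
    rintro ⟨c, -, hc⟩ A - - hA
    exact map_eq_const_of_eqOn hc hA ▸ ⟨IsSymm.ext fun _ _ => rfl, (rank_const_le_one c).trans hk⟩
  · obtain ⟨c, hc0, hc⟩ := hexists fun A hA hAl hAI => (H A hA hAl hAI).2
    have hc_nonneg : 0 ≤ c := by
      simpa [hc 0 h0] using
        (H 0 PosSemidef.zero (by simp) fun _ _ => h0).1.diag_nonneg (i := ⟨0, by omega⟩)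
    exact ⟨c, hc_nonneg.lt_of_ne' hc0, hc⟩
  · rintro ⟨c, hc0, hc⟩ A - - hA
    exact map_eq_const_of_eqOn hc hA ▸ ⟨posSemidef_const hc0.le, (rank_const_le_one c).trans hk⟩

/-- **The regime `1 ≤ k < l`.** Let `I = [0,R)` or `(-R,R)` with `0 < R ≤ ∞`, and
`f : I → ℝ` not identically zero on `I`.  Fix `n ≥ 3` and `1 ≤ k < l ≤ n`, with
additionally `k < n-1` when `I = (-R,R)`.  Then the following are equivalent:
(1) `f[A]` is symmetric of rank at most `k` for every symmetric `A` of rank at most `l`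
with entries in `I`; (2) the same for every `A ∈ P_n^l(I)`; (3) `f ≡ c` on `I` for some
`c ≠ 0`.  Moreover `f[-] : P_n^l(I) → P_n^k` iff `f ≡ c` on `I` for some `c > 0`. -/
theorem low_rank_target_forces_constant
    (R : EReal) (hR : 0 < R) (I : Set ℝ)
    (hI : I = {x : ℝ | 0 ≤ x ∧ (x : EReal) < R} ∨
          I = {x : ℝ | -R < (x : EReal) ∧ (x : EReal) < R})
    (f : ℝ → ℝ) (hf : ∃ x ∈ I, f x ≠ 0)
    (n k l : ℕ) (hn : 3 ≤ n) (hk : 1 ≤ k) (hkl : k < l) (hln : l ≤ n)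
    (hcase : I = {x : ℝ | -R < (x : EReal) ∧ (x : EReal) < R} → k < n - 1) :
    ((∀ A : Matrix (Fin n) (Fin n) ℝ, A.IsSymm → A.rank ≤ l → (∀ i j, A i j ∈ I) →
        (A.map f).IsSymm ∧ (A.map f).rank ≤ k) ↔
      (∃ c : ℝ, c ≠ 0 ∧ ∀ x ∈ I, f x = c)) ∧
    ((∀ A : Matrix (Fin n) (Fin n) ℝ, A.PosSemidef → A.rank ≤ l → (∀ i j, A i j ∈ I) →
        (A.map f).IsSymm ∧ (A.map f).rank ≤ k) ↔
      (∃ c : ℝ, c ≠ 0 ∧ ∀ x ∈ I, f x = c)) ∧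
    ((∀ A : Matrix (Fin n) (Fin n) ℝ, A.PosSemidef → A.rank ≤ l → (∀ i j, A i j ∈ I) →
        (A.map f).PosSemidef ∧ (A.map f).rank ≤ k) ↔
      (∃ c : ℝ, 0 < c ∧ ∀ x ∈ I, f x = c)) :=
  low_rank_target_forces_constant_general R hR I hI f hf n k l hk hkl hln hcase
end
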